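/- arXiv:2408.03141 — 2 statements merged into one kernel-verified Lean document; each statement's English description precedes it below -/
import Mathlib

section
/- Let Γ be a groupoid and R a gr-simple object unital Γ-graded ring. The following are equivalent: (1) R is right gr-semisimple; (2) R is right Γ₀-artinian; (3) R has a minimal graded right ideal. Moreover, the corresponding left-sided statements are also equivalent to each other. -/
set_option autoImplicit false

noncomputable section

universe u v w x y

/-- A groupoid structure on its set `Γ` of morphisms.  Objects are identified with
the identity morphisms: `src γ` and `tgt γ` are the source and target identities
(`d(γ)` and `r(γ)`), and `comp γ δ h` is the composite `γδ`, which is defined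
exactly when `src γ = tgt δ`. -/
structure Gpd (Γ : Type u) where
  src : Γ → Γ
  tgt : Γ → Γ
  inv : Γ → Γ
  comp : (γ δ : Γ) → src γ = tgt δ → Γ
  src_src : ∀ γ, src (src γ) = src γ
  tgt_src : ∀ γ, tgt (src γ) = src γ
  src_tgt : ∀ γ, src (tgt γ) = tgt γ
  tgt_tgt : ∀ γ, tgt (tgt γ) = tgt γ
  src_comp : ∀ γ δ (h : src γ = tgt δ), src (comp γ δ h) = src δ
  tgt_comp : ∀ γ δ (h : src γ = tgt δ), tgt (comp γ δ h) = tgt γ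
  comp_id : ∀ γ, comp γ (src γ) (tgt_src γ).symm = γ
  id_comp : ∀ γ, comp (tgt γ) γ (src_tgt γ) = γ
  comp_assoc : ∀ γ δ ε (h₁ : src γ = tgt δ) (h₂ : src δ = tgt ε),
    comp (comp γ δ h₁) ε ((src_comp γ δ h₁).trans h₂)
      = comp γ (comp δ ε h₂) (h₁.trans (tgt_comp δ ε h₂).symm)
  src_inv : ∀ γ, src (inv γ) = tgt γ
  tgt_inv : ∀ γ, tgt (inv γ) = src γ
  inv_inv : ∀ γ, inv (inv γ) = γ
  comp_inv : ∀ γ, comp γ (inv γ) (tgt_inv γ).symm = tgt γ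
  inv_comp : ∀ γ, comp (inv γ) γ (src_inv γ) = src γ

namespace Gpd

variable {Γ : Type u} (G : Gpd Γ)

/-- `e` is an object of the groupoid, i.e. an identity morphism. -/
def IsObj (e : Γ) : Prop := G.src e = e

open scoped Classical in
/-- Partial composition: `some (γδ)` when defined, `none` otherwise. -/
def mul? (γ δ : Γ) : Option Γ :=
  if h : G.src γ = G.tgt δ then some (G.comp γ δ h) else none

/-- The partial triple product `σ γ τ⁻¹`, `none` when undefined. -/
def conj? (σ γ τ : Γ) : Option Γ :=
  (G.mul? σ γ).bind fun η => G.mul? η (G.inv τ)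

end Gpd

/-- An object unital `Γ`-graded ring structure on the (possibly non-unital) ring `R`:
a decomposition `R = ⊕ R_γ` with `R_γ R_δ ⊆ R_{γδ}` (zero when `γδ` is undefined),
together with local units `1_e ∈ R_e` for the objects `e` such that
`1_{r(γ)} a = a 1_{d(γ)} = a` for homogeneous `a` of degree `γ`. -/
structure GammaRing {Γ : Type u} (G : Gpd Γ) (R : Type v) [NonUnitalRing R] where
  grade : Γ → AddSubgroup R
  grade_iSup : (⨆ γ : Γ, grade γ) = ⊤
  grade_indep : ∀ γ : Γ, grade γ ⊓ (⨆ (δ : Γ) (_ : δ ≠ γ), grade δ) = ⊥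
  mul_mem : ∀ (γ δ : Γ) (h : G.src γ = G.tgt δ) (a b : R),
    a ∈ grade γ → b ∈ grade δ → a * b ∈ grade (G.comp γ δ h)
  mul_ne : ∀ (γ δ : Γ), G.src γ ≠ G.tgt δ → ∀ (a b : R),
    a ∈ grade γ → b ∈ grade δ → a * b = 0
  one : Γ → R
  one_mem : ∀ e : Γ, G.IsObj e → one e ∈ grade e
  one_mul' : ∀ (γ : Γ) (a : R), a ∈ grade γ → one (G.tgt γ) * a = a
  mul_one' : ∀ (γ : Γ) (a : R), a ∈ grade γ → a * one (G.src γ) = a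

/-- A (unital) `Γ`-graded right module over the object unital `Γ`-graded ring `RG`. -/
structure GammaMod {Γ : Type u} {G : Gpd Γ} {R : Type v} [NonUnitalRing R]
    (RG : GammaRing G R) (M : Type w) [AddCommGroup M] where
  smul : M → R → M
  smul_add : ∀ (m : M) (a b : R), smul m (a + b) = smul m a + smul m b
  add_smul : ∀ (m n : M) (a : R), smul (m + n) a = smul m a + smul n a
  smul_mul : ∀ (m : M) (a b : R), smul m (a * b) = smul (smul m a) b
  grade : Γ → AddSubgroup M
  grade_iSup : (⨆ γ : Γ, grade γ) = ⊤
  grade_indep : ∀ γ : Γ, grade γ ⊓ (⨆ (δ : Γ) (_ : δ ≠ γ), grade δ) = ⊥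
  smul_mem : ∀ (σ τ : Γ) (h : G.src σ = G.tgt τ) (m : M) (a : R),
    m ∈ grade σ → a ∈ RG.grade τ → smul m a ∈ grade (G.comp σ τ h)
  smul_ne : ∀ (σ τ : Γ), G.src σ ≠ G.tgt τ → ∀ (m : M) (a : R),
    m ∈ grade σ → a ∈ RG.grade τ → smul m a = 0
  smul_one : ∀ (σ : Γ) (m : M), m ∈ grade σ → smul m (RG.one (G.src σ)) = m

/-- A (unital) `Γ`-graded left module over the object unital `Γ`-graded ring `RG`. -/
structure GammaLMod {Γ : Type u} {G : Gpd Γ} {R : Type v} [NonUnitalRing R]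
    (RG : GammaRing G R) (M : Type w) [AddCommGroup M] where
  smul : R → M → M
  smul_add : ∀ (a : R) (m n : M), smul a (m + n) = smul a m + smul a n
  add_smul : ∀ (a b : R) (m : M), smul (a + b) m = smul a m + smul b m
  mul_smul : ∀ (a b : R) (m : M), smul (a * b) m = smul a (smul b m)
  grade : Γ → AddSubgroup M
  grade_iSup : (⨆ γ : Γ, grade γ) = ⊤
  grade_indep : ∀ γ : Γ, grade γ ⊓ (⨆ (δ : Γ) (_ : δ ≠ γ), grade δ) = ⊥
  smul_mem : ∀ (τ σ : Γ) (h : G.src τ = G.tgt σ) (a : R) (m : M),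
    a ∈ RG.grade τ → m ∈ grade σ → smul a m ∈ grade (G.comp τ σ h)
  smul_ne : ∀ (τ σ : Γ), G.src τ ≠ G.tgt σ → ∀ (a : R) (m : M),
    a ∈ RG.grade τ → m ∈ grade σ → smul a m = 0
  one_smul : ∀ (σ : Γ) (m : M), m ∈ grade σ → smul (RG.one (G.tgt σ)) m = m

namespace GammaMod

variable {Γ : Type u} {G : Gpd Γ} {R : Type v} [NonUnitalRing R] {RG : GammaRing G R}
  {M : Type w} [AddCommGroup M] (Mod : GammaMod RG M)

/-- `shiftGrade σ γ` is the homogeneous component `M_{σγ}` (zero when undefined):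
the degree-`γ` component of the shifted module `M(σ)`. -/
def shiftGrade (σ γ : Γ) : AddSubgroup M := (G.mul? σ γ).elim ⊥ Mod.grade

/-- `N` is a graded submodule of `M`. -/
def IsGradedSub (N : AddSubgroup M) : Prop :=
  (∀ m ∈ N, ∀ a : R, Mod.smul m a ∈ N) ∧ N ≤ ⨆ γ : Γ, (Mod.grade γ ⊓ N)

/-- `N` is a gr-simple graded submodule of `M`. -/
def IsGrSimpleSub (N : AddSubgroup M) : Prop :=
  Mod.IsGradedSub N ∧ N ≠ ⊥ ∧
    ∀ P : AddSubgroup M, Mod.IsGradedSub P → P ≤ N → P = ⊥ ∨ P = N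

/-- `M` is a gr-simple graded module. -/
def IsGrSimple : Prop := Mod.IsGrSimpleSub ⊤

/-- `M` is a gr-semisimple graded module: it is the sum of its gr-simple graded
submodules. -/
def IsGrSemisimple : Prop :=
  (⨆ (N : AddSubgroup M) (_ : Mod.IsGrSimpleSub N), N) = ⊤

/-- The submodule `M(e) = ⊕_{r(γ) = e} M_γ`. -/
def eComp (e : Γ) : AddSubgroup M := ⨆ (γ : Γ) (_ : G.tgt γ = e), Mod.grade γ

/-- `M` is `Γ₀`-artinian: each `M(e)` satisfies the descending chain condition on
graded submodules. -/
def IsGamma0Artinian : Prop :=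
  ∀ e : Γ, G.IsObj e → ∀ f : ℕ → AddSubgroup M,
    (∀ n, Mod.IsGradedSub (f n) ∧ f n ≤ Mod.eComp e) →
    (∀ n, f (n + 1) ≤ f n) → ∃ n, ∀ k, n ≤ k → f k = f n

/-- `M` is a (nonzero) `Γ₀`-simple module: `M(e)` is gr-simple for every `e ∈ Γ'₀(M)`. -/
def IsGamma0Simple : Prop :=
  (∃ m : M, m ≠ 0) ∧
    ∀ e : Γ, G.IsObj e → Mod.eComp e ≠ ⊥ → Mod.IsGrSimpleSub (Mod.eComp e)

theorem isGradedSub_top : Mod.IsGradedSub (⊤ : AddSubgroup M) := by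
  constructor
  · intro m _ a
    exact AddSubgroup.mem_top _
  · have h : (⨆ γ : Γ, (Mod.grade γ ⊓ (⊤ : AddSubgroup M))) = (⊤ : AddSubgroup M) := by
      simp [Mod.grade_iSup]
    rw [h]

/-- `HomGrade γ` is the homogeneous component `HOM_R(M,M)_γ` of the graded
endomorphism ring `END_R(M)`: the `R`-linear additive endomorphisms `g` with
`g(M_σ) ⊆ M_{γσ}` for all `σ`. -/
def HomGrade (γ : Γ) : Set (M →+ M) :=
  {g | (∀ (m : M) (a : R), g (Mod.smul m a) = Mod.smul (g m) a) ∧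
       ∀ (σ : Γ) (m : M), m ∈ Mod.grade σ → g m ∈ Mod.shiftGrade γ σ}

/-- The graded submodule `N` of `M` is gr-isomorphic to a shift of the graded
submodule `N'` of `M₂`: there are `σ ∈ Γ` and a gr-isomorphism `N ≅ N'(σ)`. -/
def SubIso {M₂ : Type x} [AddCommGroup M₂] (Mod₂ : GammaMod RG M₂)
    (N : AddSubgroup M) (N' : AddSubgroup M₂) (hN : Mod.IsGradedSub N) : Prop :=
  ∃ (σ : Γ) (ψ : N ≃+ N'),
    (∀ (n : N) (a : R),
      ((ψ ⟨Mod.smul n.1 a, hN.1 n.1 n.2 a⟩ : N') : M₂) = Mod₂.smul ((ψ n : N') : M₂) a) ∧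
    ∀ γ : Γ, (fun n : N => ((ψ n : N') : M₂)) '' {n : N | (n : M) ∈ Mod.grade γ}
      = {m : M₂ | m ∈ N' ∧ m ∈ Mod₂.shiftGrade σ γ}

variable {ι : Type y}

/-- A pseudo-linearly independent sequence of homogeneous elements. -/
def PseudoLI (β : ι → Γ) (v : ι → M) : Prop :=
  (∀ i, v i ∈ Mod.grade (β i) ∧ v i ≠ 0) ∧
  ∀ a : ι →₀ R, (∀ i, RG.one (G.src (β i)) * a i = a i) →
    (a.sum fun i r => Mod.smul (v i) r) = 0 → a = 0

/-- A pseudo-basis of `M`: a generating pseudo-linearly independent sequence of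
homogeneous elements. -/
def PseudoBasis (β : ι → Γ) (v : ι → M) : Prop :=
  Mod.PseudoLI β v ∧
    AddSubgroup.closure {m : M | ∃ (i : ι) (r : R), m = Mod.smul (v i) r} = ⊤

/-- `M` is pseudo-free: it has a pseudo-basis. -/
def PseudoFree : Prop :=
  ∃ (κ : Type (max u w)) (β : κ → Γ) (v : κ → M), Mod.PseudoBasis β v

end GammaMod

namespace GammaLMod

variable {Γ : Type u} {G : Gpd Γ} {R : Type v} [NonUnitalRing R] {RG : GammaRing G R}
  {M : Type w} [AddCommGroup M] (Mod : GammaLMod RG M)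

/-- `rshiftGrade σ γ` is the homogeneous component `M_{σγ}` (zero when undefined). -/
def rshiftGrade (σ γ : Γ) : AddSubgroup M := (G.mul? σ γ).elim ⊥ Mod.grade

/-- `N` is a graded left submodule of `M`. -/
def IsGradedSub (N : AddSubgroup M) : Prop :=
  (∀ m ∈ N, ∀ a : R, Mod.smul a m ∈ N) ∧ N ≤ ⨆ γ : Γ, (Mod.grade γ ⊓ N)

def IsGrSimpleSub (N : AddSubgroup M) : Prop :=
  Mod.IsGradedSub N ∧ N ≠ ⊥ ∧
    ∀ P : AddSubgroup M, Mod.IsGradedSub P → P ≤ N → P = ⊥ ∨ P = N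

def IsGrSimple : Prop := Mod.IsGrSimpleSub ⊤

def IsGrSemisimple : Prop :=
  (⨆ (N : AddSubgroup M) (_ : Mod.IsGrSimpleSub N), N) = ⊤

/-- The left submodule `(e)M = ⊕_{d(γ) = e} M_γ`. -/
def lComp (e : Γ) : AddSubgroup M := ⨆ (γ : Γ) (_ : G.src γ = e), Mod.grade γ

def IsGamma0Artinian : Prop :=
  ∀ e : Γ, G.IsObj e → ∀ f : ℕ → AddSubgroup M,
    (∀ n, Mod.IsGradedSub (f n) ∧ f n ≤ Mod.lComp e) →
    (∀ n, f (n + 1) ≤ f n) → ∃ n, ∀ k, n ≤ k → f k = f n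

/-- `V` has finite `Γ₀`-dimension: each `(e)V` has a finite pseudo-basis. -/
def FiniteGamma0Dim : Prop :=
  ∀ e : Γ, G.IsObj e → ∃ (n : ℕ) (γs : Fin n → Γ) (u : Fin n → M),
    (∀ i, G.src (γs i) = e ∧ u i ∈ Mod.grade (γs i) ∧ u i ≠ 0) ∧
    (∀ m ∈ Mod.lComp e,
      m ∈ AddSubgroup.closure {y : M | ∃ (i : Fin n) (a : R), y = Mod.smul a (u i)}) ∧
    ∀ a : Fin n → R, (∀ i, a i * RG.one (G.tgt (γs i)) = a i) →
      (∑ i, Mod.smul (a i) (u i)) = 0 → ∀ i, a i = 0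

end GammaLMod

namespace GammaRing

variable {Γ : Type u} {G : Gpd Γ} {R : Type v} [NonUnitalRing R] (RG : GammaRing G R)

/-- The (right) regular graded module `R_R`. -/
def regular : GammaMod RG R where
  smul := fun m a => m * a
  smul_add := fun m a b => mul_add m a b
  add_smul := fun m n a => add_mul m n a
  smul_mul := fun m a b => (mul_assoc m a b).symm
  grade := RG.grade
  grade_iSup := RG.grade_iSup
  grade_indep := RG.grade_indep
  smul_mem := RG.mul_mem
  smul_ne := RG.mul_ne
  smul_one := RG.mul_one'

/-- The left regular graded module `_R R`. -/
def leftRegular : GammaLMod RG R where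
  smul := fun a m => a * m
  smul_add := fun a m n => mul_add a m n
  add_smul := fun a b m => add_mul a b m
  mul_smul := fun a b m => mul_assoc a b m
  grade := RG.grade
  grade_iSup := RG.grade_iSup
  grade_indep := RG.grade_indep
  smul_mem := RG.mul_mem
  smul_ne := RG.mul_ne
  one_smul := RG.one_mul'

/-- `I` is a graded (two-sided) ideal of `R`. -/
def IsGradedIdeal (I : AddSubgroup R) : Prop :=
  (∀ a ∈ I, ∀ r : R, a * r ∈ I ∧ r * a ∈ I) ∧ I ≤ ⨆ γ : Γ, (RG.grade γ ⊓ I)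

/-- `R` is a gr-simple ring. -/
def IsGrSimpleRing : Prop :=
  (∃ a : R, a ≠ 0) ∧ ∀ I : AddSubgroup R, RG.IsGradedIdeal I → I = ⊥ ∨ I = ⊤

/-- `R` is a gr-prime ring. -/
def IsGrPrime : Prop :=
  (∃ a : R, a ≠ 0) ∧ ∀ I J : AddSubgroup R, RG.IsGradedIdeal I → RG.IsGradedIdeal J →
    I ≠ ⊥ → J ≠ ⊥ → ∃ a ∈ I, ∃ b ∈ J, a * b ≠ 0

/-- `R` is a `Γ`-graded division ring: `R ≠ 0` and every nonzero homogeneous element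
of degree `γ` has an inverse of degree `γ⁻¹`. -/
def IsGrDivision : Prop :=
  (∃ a : R, a ≠ 0) ∧ ∀ (γ : Γ) (a : R), a ∈ RG.grade γ → a ≠ 0 →
    ∃ b ∈ RG.grade (G.inv γ), a * b = RG.one (G.tgt γ) ∧ b * a = RG.one (G.src γ)

/-- `supp(R) ⊆ eΓe`. -/
def SuppLE (e : Γ) : Prop := ∀ γ : Γ, RG.grade γ ≠ ⊥ → G.src γ = e ∧ G.tgt γ = e

def IsRightGrSemisimple : Prop := RG.regular.IsGrSemisimple

def IsLeftGrSemisimple : Prop := RG.leftRegular.IsGrSemisimple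

def IsRightGamma0Artinian : Prop := RG.regular.IsGamma0Artinian

def IsLeftGamma0Artinian : Prop := RG.leftRegular.IsGamma0Artinian

/-- The component ring `R_e` is a division ring with identity `1_e`. -/
def ComponentDivisionRing (e : Γ) : Prop :=
  RG.one e ≠ 0 ∧ ∀ a ∈ RG.grade e, a ≠ 0 →
    ∃ b ∈ RG.grade e, a * b = RG.one e ∧ b * a = RG.one e

/-- The additive subgroup `N` of `R` is, with the induced structure, a gr-simple
graded ring. -/
def SubringGrSimple (N : AddSubgroup R) : Prop :=
  N ≠ ⊥ ∧ ∀ P : AddSubgroup R,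
    (P ≤ N ∧ (∀ p ∈ P, ∀ n ∈ N, p * n ∈ P ∧ n * p ∈ P) ∧
      P ≤ ⨆ γ : Γ, (RG.grade γ ⊓ P)) →
    P = ⊥ ∨ P = N

/-- The additive subgroup `N` of `R` is, with the induced structure, a gr-prime
graded ring. -/
def SubringGrPrime (N : AddSubgroup R) : Prop :=
  (∃ a ∈ N, a ≠ 0) ∧ ∀ P Q : AddSubgroup R,
    (P ≤ N ∧ (∀ p ∈ P, ∀ n ∈ N, p * n ∈ P ∧ n * p ∈ P) ∧
      P ≤ ⨆ γ : Γ, (RG.grade γ ⊓ P)) →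
    (Q ≤ N ∧ (∀ q ∈ Q, ∀ n ∈ N, q * n ∈ Q ∧ n * q ∈ Q) ∧
      Q ≤ ⨆ γ : Γ, (RG.grade γ ⊓ Q)) →
    P ≠ ⊥ → Q ≠ ⊥ → ∃ p ∈ P, ∃ q ∈ Q, p * q ≠ 0

/-- The additive subgroup `N` of `R` is, with the induced structure, a graded
division ring. -/
def SubringGrDivision (N : AddSubgroup R) : Prop :=
  (∃ a ∈ N, a ≠ 0) ∧ ∀ (γ : Γ) (a : R), a ∈ RG.grade γ → a ∈ N → a ≠ 0 →
    RG.one (G.tgt γ) ∈ N ∧ RG.one (G.src γ) ∈ N ∧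
    ∃ b ∈ RG.grade (G.inv γ), b ∈ N ∧ a * b = RG.one (G.tgt γ) ∧ b * a = RG.one (G.src γ)

/-- The additive subgroup `N` of `R` is, with the induced structure, a right
`Γ₀`-artinian graded ring. -/
def SubringRightGamma0Artinian (N : AddSubgroup R) : Prop :=
  ∀ e : Γ, G.IsObj e → ∀ f : ℕ → AddSubgroup R,
    (∀ n, f n ≤ N ⊓ RG.regular.eComp e ∧ (∀ p ∈ f n, ∀ x ∈ N, p * x ∈ f n) ∧
      f n ≤ ⨆ γ : Γ, (RG.grade γ ⊓ f n)) →
    (∀ n, f (n + 1) ≤ f n) → ∃ n, ∀ k, n ≤ k → f k = f n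

end GammaRing

/-- A bundled object unital `Γ`-graded ring. -/
structure BRing.{u', v'} {Γ : Type u'} (G : Gpd Γ) where
  carrier : Type v'
  [ring : NonUnitalRing carrier]
  str : GammaRing G carrier

attribute [instance] BRing.ring

/-- A bundled `Γ`-graded right module over `RG`. -/
structure BMod.{u', v', w'} {Γ : Type u'} {G : Gpd Γ} {R : Type v'} [NonUnitalRing R]
    (RG : GammaRing G R) where
  carrier : Type w'
  [acg : AddCommGroup carrier]
  str : GammaMod RG carrier

attribute [instance] BMod.acg

/-- Two bundled graded modules are in the same isoshift class. -/
def BModSameClass {Γ : Type u} {G : Gpd Γ} {R : Type v} [NonUnitalRing R]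
    {RG : GammaRing G R} (S T : BMod.{u, v, w} RG) : Prop :=
  S.str.SubIso T.str ⊤ ⊤ S.str.isGradedSub_top

/-- The isoshiftical component of `R` of the type of the graded module `S`:
the sum of all graded right ideals of `R` which are gr-simple and lie in the
isoshift class of `S`. -/
def GammaRing.isoComponent {Γ : Type u} {G : Gpd Γ} {R : Type v} [NonUnitalRing R]
    (RG : GammaRing G R) (S : BMod.{u, v, w} RG) : AddSubgroup R :=
  ⨆ (N : AddSubgroup R) (_ : RG.regular.IsGrSimpleSub N ∧
      ∃ hN : RG.regular.IsGradedSub N, RG.regular.SubIso S.str N ⊤ hN), N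

/-- `R` is a pseudo-free module ring: every `Γ`-graded right `R`-module is
pseudo-free. -/
def GammaRing.IsPfm.{u', v', w'} {Γ : Type u'} {G : Gpd Γ} {R : Type v'}
    [NonUnitalRing R] (RG : GammaRing G R) : Prop :=
  ∀ S : BMod.{u', v', w'} RG, S.str.PseudoFree

/-- `R` has invariant pseudo-basis number: any two pseudo-bases of a finitely
generated pseudo-free graded module have the same number of elements. -/
def GammaRing.IPBN.{u', v', w'} {Γ : Type u'} {G : Gpd Γ} {R : Type v'}
    [NonUnitalRing R] (RG : GammaRing G R) : Prop :=
  ∀ (S : BMod.{u', v', w'} RG) (m n : ℕ) (β₁ : Fin m → Γ) (v₁ : Fin m → S.carrier)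
    (β₂ : Fin n → Γ) (v₂ : Fin n → S.carrier),
    S.str.PseudoBasis β₁ v₁ → S.str.PseudoBasis β₂ v₂ → m = n

/-- A `d`-finite sequence of elements of `eΓ`. -/
def DFiniteSeq {Γ : Type u} (G : Gpd Γ) {I : Type w} (e : Γ) (σ : I → Γ) : Prop :=
  (∀ i, G.tgt (σ i) = e) ∧ ∀ f : Γ, {i : I | G.src (σ i) = f}.Finite

/-- The degree-`γ` constraint on the `(i,j)` entry of a homogeneous matrix:
the component `D_{σ_i γ σ_j⁻¹}` (zero when the product is undefined). -/
def entryGrade {Γ : Type u} (G : Gpd Γ) {D : Type v} [NonUnitalRing D]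
    (DG : GammaRing G D) {I : Type w} (σ : I → Γ) (γ : Γ) (i j : I) : AddSubgroup D :=
  (G.conj? (σ i) γ (σ j)).elim ⊥ DG.grade

/-- The `(i,j)` entry of the product of two finitely supported matrices. -/
def matMulEntry {I : Type w} {D : Type v} [NonUnitalRing D]
    (A B : I →₀ I →₀ D) (i j : I) : D :=
  (A i).sum fun k a => a * B k j

/-- `R` is gr-isomorphic to the graded matrix ring `M_I(D)(σ̄)`: there is an
injective additive map from `R` to the finitely supported `I×I` matrices over `D`
which respects matrix multiplication and maps the homogeneous component `R_γ` onto
the set of homogeneous matrices of degree `γ`. -/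
def GammaRing.GrRepMatrix {Γ : Type u} {G : Gpd Γ} {R : Type v} {D : Type x}
    [NonUnitalRing R] [NonUnitalRing D] (RG : GammaRing G R) (DG : GammaRing G D)
    {I : Type w} (σ : I → Γ) : Prop :=
  ∃ φ : R →+ (I →₀ I →₀ D), Function.Injective φ ∧
    (∀ (a b : R) (i j : I), φ (a * b) i j = matMulEntry (φ a) (φ b) i j) ∧
    ∀ γ : Γ, (fun r : R => φ r) '' (RG.grade γ : Set R)
      = {m : I →₀ I →₀ D | ∀ i j : I, m i j ∈ entryGrade G DG σ γ i j}

/-- Entry constraint for matrix rings indexed by a sequence of subsets of `Γ`: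
the component `D_{Σ_i γ Σ_j⁻¹}`. -/
def entryGradeSet {Γ : Type u} (G : Gpd Γ) {D : Type v} [NonUnitalRing D]
    (DG : GammaRing G D) {I : Type w} (Sig : I → Set Γ) (γ : Γ) (i j : I) :
    AddSubgroup D :=
  ⨆ (σ : Γ) (_ : σ ∈ Sig i) (τ : Γ) (_ : τ ∈ Sig j), (G.conj? σ γ τ).elim ⊥ DG.grade

/-- `R` is gr-isomorphic to the graded matrix ring `M_I(D)(Σ̄)` for a sequence of
subsets `Σ̄`. -/
def GammaRing.GrRepMatrixSet {Γ : Type u} {G : Gpd Γ} {R : Type v} {D : Type x}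
    [NonUnitalRing R] [NonUnitalRing D] (RG : GammaRing G R) (DG : GammaRing G D)
    {I : Type w} (Sig : I → Set Γ) : Prop :=
  ∃ φ : R →+ (I →₀ I →₀ D), Function.Injective φ ∧
    (∀ (a b : R) (i j : I), φ (a * b) i j = matMulEntry (φ a) (φ b) i j) ∧
    ∀ γ : Γ, (fun r : R => φ r) '' (RG.grade γ : Set R)
      = {m : I →₀ I →₀ D | ∀ i j : I, m i j ∈ entryGradeSet G DG Sig γ i j}

/-- The family of graded rings `Rj` is summable. -/
def SummableFam {Γ : Type u} {G : Gpd Γ} {J : Type w} (Rj : J → BRing.{u, x} G) : Prop :=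
  ∀ e : Γ, G.IsObj e → {j : J | (Rj j).str.grade e ≠ ⊥}.Finite

/-- `P` (with projections `π`) is the graded direct product `∏^gr_j R_j`. -/
def IsGradedProductB {Γ : Type u} {G : Gpd Γ} {J : Type w} (Rj : J → BRing.{u, x} G)
    {P : Type v} [NonUnitalRing P] (PG : GammaRing G P)
    (π : ∀ j, P →+ (Rj j).carrier) : Prop :=
  (∀ (j : J) (a b : P), π j (a * b) = π j a * π j b) ∧
  (∀ (j : J) (e : Γ), G.IsObj e → π j (PG.one e) = (Rj j).str.one e) ∧
  ∀ (γ : Γ) (xs : ∀ j, (Rj j).carrier), (∀ j, xs j ∈ (Rj j).str.grade γ) →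
    ∃! p : P, p ∈ PG.grade γ ∧ ∀ j, π j p = xs j

/-- `R` and `S` are gr-isomorphic graded rings. -/
def GrIso {Γ : Type u} {G : Gpd Γ} {R : Type v} {S : Type x}
    [NonUnitalRing R] [NonUnitalRing S] (RG : GammaRing G R) (SG : GammaRing G S) :
    Prop :=
  ∃ φ : R ≃+ S, (∀ a b : R, φ (a * b) = φ a * φ b) ∧
    (∀ e : Γ, G.IsObj e → φ (RG.one e) = SG.one e) ∧
    ∀ γ : Γ, (fun a : R => φ a) '' (RG.grade γ : Set R) = (SG.grade γ : Set S)

/-- The gr-primality relation: `1_e D 1_f ≠ 0`. -/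
def GrPrimRel {Γ : Type u} (G : Gpd Γ) {D : Type v} [NonUnitalRing D]
    (DG : GammaRing G D) (e f : Γ) : Prop :=
  ∃ x : D, DG.one e * x * DG.one f ≠ 0

/-- The graded ideal `D_{[e]}` attached to the `∼`-class of `e`. -/
def ClassIdeal {Γ : Type u} (G : Gpd Γ) {D : Type v} [NonUnitalRing D]
    (DG : GammaRing G D) (e : Γ) : AddSubgroup D :=
  ⨆ (γ : Γ) (_ : GrPrimRel G DG (G.tgt γ) e ∧ GrPrimRel G DG (G.src γ) e), DG.grade γ

end
universe u v w x y

/-!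
Graded right ideals form a modular lattice whose atoms are the minimal graded right ideals.
If `R` is gr-semisimple, `1_e` lies in a finite sum of atoms, and this graded right ideal contains
`R(e) = 1_e R`; chains below a finite sum of atoms stabilize by the modular law, so `R` is
`Γ₀`-artinian. A nonzero `R(e)` with the descending chain condition contains an atom. Conversely,
if `N` is minimal and `r` is homogeneous, then `rN` is zero or minimal (the homogeneous components
of `rx` are the `r x_γ`), so the graded socle is a nonzero graded two-sided ideal, hence all of
`R`. The left-sided statements are the right-sided ones for `Rᵐᵒᵖ`, graded over the opposite
groupoid.
-/

section ChainCondition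

variable {α : Type*}

/-- `GammaMod.IsGrSimpleSub` unfolds to `IsAtomAmong GammaMod.IsGradedSub`. -/
def IsAtomAmong [PartialOrder α] [OrderBot α] (P : α → Prop) (a : α) : Prop :=
  P a ∧ a ≠ ⊥ ∧ ∀ x, P x → x ≤ a → x = ⊥ ∨ x = a

def ChainsStabilizeBelow [Preorder α] (P : α → Prop) (a : α) : Prop :=
  ∀ f : ℕ → α, (∀ n, P (f n) ∧ f n ≤ a) → (∀ n, f (n + 1) ≤ f n) →
    ∃ n, ∀ k, n ≤ k → f k = f n

variable {P : α → Prop}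

theorem ChainsStabilizeBelow.mono [Preorder α] {a b : α} (hb : ChainsStabilizeBelow P b)
    (hab : a ≤ b) : ChainsStabilizeBelow P a :=
  fun f hf ↦ hb f fun n ↦ ⟨(hf n).1, (hf n).2.trans hab⟩

theorem chainsStabilizeBelow_bot [PartialOrder α] [OrderBot α] :
    ChainsStabilizeBelow P ⊥ :=
  fun _ hf _ ↦ ⟨0, fun k _ ↦ (le_bot_iff.mp (hf k).2).trans (le_bot_iff.mp (hf 0).2).symm⟩

theorem IsAtomAmong.chainsStabilizeBelow [PartialOrder α] [OrderBot α] {a : α}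
    (ha : IsAtomAmong P a) : ChainsStabilizeBelow P a := by
  intro f hf hdec
  by_cases hzero : ∃ n, f n = ⊥
  · obtain ⟨n, hn⟩ := hzero
    exact ⟨n, fun k hk ↦ hn ▸ le_bot_iff.mp (hn ▸ antitone_nat_of_succ_le hdec hk)⟩
  · push Not at hzero
    have hfa : ∀ n, f n = a := fun n ↦ ((ha.2.2 _ (hf n).1 (hf n).2).resolve_left (hzero n))
    exact ⟨0, fun k _ ↦ (hfa k).trans (hfa 0).symm⟩

/-- The modular law reduces a chain below `a ⊔ b` to its traces `x ⊓ a` below `a` and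
`b ⊓ (x ⊔ a)` below `b`. -/
theorem ChainsStabilizeBelow.sup [Lattice α] [IsModularLattice α]
    (hinf : ∀ x y, P x → P y → P (x ⊓ y)) (hsup : ∀ x y, P x → P y → P (x ⊔ y))
    {a b : α} (hPa : P a) (hPb : P b) (ha : ChainsStabilizeBelow P a)
    (hb : ChainsStabilizeBelow P b) : ChainsStabilizeBelow P (a ⊔ b) := by
  intro f hf hdec
  obtain ⟨n₁, h₁⟩ := ha (fun n ↦ f n ⊓ a) (fun n ↦ ⟨hinf _ _ (hf n).1 hPa, inf_le_right⟩)
    (fun n ↦ inf_le_inf_right a (hdec n))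
  obtain ⟨n₂, h₂⟩ := hb (fun n ↦ b ⊓ (f n ⊔ a))
    (fun n ↦ ⟨hinf _ _ hPb (hsup _ _ (hf n).1 hPa), inf_le_left⟩)
    (fun n ↦ inf_le_inf_left b (sup_le_sup_right (hdec n) a))
  have hsup_eq : ∀ n, f n ⊔ a = a ⊔ b ⊓ (f n ⊔ a) := fun n ↦ by
    rw [← sup_inf_assoc_of_le b le_sup_right, inf_eq_right.mpr (sup_le (hf n).2 le_sup_left)]
  refine ⟨max n₁ n₂, fun k hk ↦ ?_⟩
  refine eq_of_le_of_inf_le_of_sup_le (antitone_nat_of_succ_le hdec hk) (z := a) ?_ ?_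
  · rw [h₁ k (le_of_max_le_left hk), h₁ _ (le_max_left _ _)]
  · rw [hsup_eq, hsup_eq k, h₂ k (le_of_max_le_right hk), h₂ _ (le_max_right _ _)]

theorem chainsStabilizeBelow_finsetSup [Lattice α] [OrderBot α] [IsModularLattice α]
    (hbot : P ⊥) (hinf : ∀ x y, P x → P y → P (x ⊓ y)) (hsup : ∀ x y, P x → P y → P (x ⊔ y))
    {ι : Type*} (s : Finset ι) (N : ι → α) (hs : ∀ i ∈ s, IsAtomAmong P (N i)) :
    ChainsStabilizeBelow P (s.sup N) := by
  classical
  induction s using Finset.induction_on with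
  | empty => exact chainsStabilizeBelow_bot
  | insert i s _ ih =>
    simp only [Finset.mem_insert, forall_eq_or_imp] at hs
    rw [Finset.sup_insert]
    exact hs.1.chainsStabilizeBelow.sup hinf hsup hs.1.1
      (Finset.sup_induction hbot (fun x hx y hy ↦ hsup x y hx hy) fun j hj ↦ (hs.2 j hj).1)
      (ih hs.2)

theorem ChainsStabilizeBelow.exists_isAtomAmong_le [PartialOrder α] [OrderBot α] {E : α}
    (hE : ChainsStabilizeBelow P E) (hPE : P E) (hE₀ : E ≠ ⊥) : ∃ N ≤ E, IsAtomAmong P N := by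
  by_contra! hno
  have hstep : ∀ x : {x // P x ∧ x ≠ ⊥ ∧ x ≤ E}, ∃ y : {x // P x ∧ x ≠ ⊥ ∧ x ≤ E},
      y.1 < x.1 := by
    rintro ⟨x, hPx, hx₀, hxE⟩
    have : ¬ ∀ y, P y → y ≤ x → y = ⊥ ∨ y = x := fun h ↦ hno x hxE ⟨hPx, hx₀, h⟩
    push Not at this
    obtain ⟨y, hPy, hyx, hy₀, hne⟩ := this
    exact ⟨⟨y, hPy, hy₀, hyx.trans hxE⟩, lt_of_le_of_ne hyx hne⟩
  choose next hnext using hstep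
  let g : ℕ → {x // P x ∧ x ≠ ⊥ ∧ x ≤ E} := fun n ↦ next^[n] ⟨E, hPE, hE₀, le_rfl⟩
  have hg : ∀ n, g (n + 1) = next (g n) := fun n ↦ Function.iterate_succ_apply' next n _
  obtain ⟨n, hn⟩ := hE (fun n ↦ (g n).1) (fun n ↦ ⟨(g n).2.1, (g n).2.2.2⟩)
    (fun n ↦ by rw [hg]; exact (hnext (g n)).le)
  exact (hnext (g n)).ne (by rw [← hg]; exact hn (n + 1) n.le_succ)

end ChainCondition

section OrderIsoTransfer

variable {α β : Type*} {P : α → Prop} {Q : β → Prop}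

theorem OrderIso.isAtomAmong_apply_iff [PartialOrder α] [OrderBot α] [PartialOrder β]
    [OrderBot β] (Φ : α ≃o β) (hPQ : ∀ a, Q (Φ a) ↔ P a) (a : α) :
    IsAtomAmong Q (Φ a) ↔ IsAtomAmong P a := by
  simp only [IsAtomAmong, ← Φ.toEquiv.forall_congr_right (q := fun y ↦ Q y → y ≤ Φ a → _)]
  simp [hPQ]

theorem OrderIso.chainsStabilizeBelow_apply_iff [PartialOrder α] [PartialOrder β] (Φ : α ≃o β)
    (hPQ : ∀ a, Q (Φ a) ↔ P a) (a : α) :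
    ChainsStabilizeBelow Q (Φ a) ↔ ChainsStabilizeBelow P a := by
  constructor
  · intro h f hf hdec
    obtain ⟨n, hn⟩ := h (Φ ∘ f) (fun n ↦ ⟨(hPQ _).mpr (hf n).1, Φ.monotone (hf n).2⟩)
      (fun n ↦ Φ.monotone (hdec n))
    exact ⟨n, fun k hk ↦ Φ.injective (hn k hk)⟩
  · intro h g hg hdec
    obtain ⟨n, hn⟩ := h (Φ.symm ∘ g)
      (fun n ↦ ⟨(hPQ _).mp (by simpa using (hg n).1), Φ.symm_apply_le.mpr (hg n).2⟩)
      (fun n ↦ Φ.symm.monotone (hdec n))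
    exact ⟨n, fun k hk ↦ Φ.symm.injective (hn k hk)⟩

theorem OrderIso.iSup_pred_eq_apply [CompleteLattice α] [CompleteLattice β] (Φ : α ≃o β)
    (hPQ : ∀ a, Q (Φ a) ↔ P a) : ⨆ (b) (_ : Q b), b = Φ (⨆ (a) (_ : P a), a) := by
  rw [map_iSup₂]
  exact (Φ.toEquiv.iSup_congr fun a ↦ iSup_congr_Prop (hPQ a) fun _ ↦ rfl).symm

end OrderIsoTransfer

theorem AddSubgroup.mem_iSup_iff_exists_finsupp {ι M : Type*} [AddCommGroup M]
    (A : ι → AddSubgroup M) (x : M) :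
    x ∈ ⨆ i, A i ↔ ∃ f : ι →₀ M, (∀ i, f i ∈ A i) ∧ (f.sum fun _ y ↦ y) = x := by
  change x ∈ AddSubgroup.toIntSubmodule (⨆ i, A i) ↔ _
  rw [_root_.map_iSup]
  exact Submodule.mem_iSup_iff_exists_finsupp _ _

theorem mem_of_sum_mem_of_iSupIndep {ι κ M : Type*} [AddCommGroup M] {A : ι → AddSubgroup M}
    (hA : iSupIndep A) {N : AddSubgroup M} (hN : N ≤ ⨆ i, A i ⊓ N) {t : Finset κ} {g : κ → ι}
    (hg : Set.InjOn g t) {v : κ → M} (hv : ∀ k ∈ t, v k ∈ A (g k))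
    (hsum : ∑ k ∈ t, v k ∈ N) : ∀ k ∈ t, v k ∈ N := by
  classical
  have hA' : iSupIndep fun i ↦ (A i).toIntSubmodule :=
    (iSupIndep_map_orderIso_iff AddSubgroup.toIntSubmodule).mpr hA
  -- By independence, the fibre sums `u` of `v` along `g` agree with the components `w` of
  -- `∑ v` in `⨆ i, A i ⊓ N`; by injectivity of `g` the fibres are singletons.
  obtain ⟨w, hwA, hw⟩ := (AddSubgroup.mem_iSup_iff_exists_finsupp _ _).mp (hN hsum)
  let u : ι → M := fun i ↦ ∑ k ∈ t with g k = i, v k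
  have hu : ∀ k ∈ t, u (g k) = v k := fun k hk ↦
    Finset.sum_eq_single_of_mem k (by simp [hk]) fun k' hk' hne ↦
      (hne (hg (Finset.mem_filter.1 hk').1 hk (Finset.mem_filter.1 hk').2)).elim
  have huA : ∀ i, u i ∈ A i := fun i ↦ sum_mem fun k hk ↦
    (Finset.mem_filter.1 hk).2 ▸ hv k (Finset.mem_filter.1 hk).1
  set S := t.image g ∪ w.support
  have huw : ∀ i ∈ S, u i = w i := by
    refine (iSupIndep_iff_finsetSum_eq_imp_eq _).mp hA' S u w
      (fun i _ ↦ ⟨huA i, (hwA i).1⟩) ?_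
    rw [Finset.sum_fiberwise_of_maps_to fun k hk ↦ Finset.mem_union_left _
      (Finset.mem_image_of_mem g hk), ← hw, Finsupp.sum_of_support_subset w
      Finset.subset_union_right _ fun _ _ ↦ rfl]
  intro k hk
  rw [← hu k hk, huw _ (Finset.mem_union_left _ (Finset.mem_image_of_mem g hk))]
  exact (hwA _).2

namespace Gpd

variable {Γ : Type u} (G : Gpd Γ)

theorem comp_congr_left {a b c : Γ} (hab : a = b) (h : G.src a = G.tgt c) :
    G.comp a c h = G.comp b c (hab ▸ h) := by
  subst hab; rfl

theorem inv_comp_comp (τ γ : Γ) (h : G.src τ = G.tgt γ) :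
    G.comp (G.inv τ) (G.comp τ γ h) ((G.src_inv τ).trans (G.tgt_comp τ γ h).symm) = γ := by
  rw [← G.comp_assoc (G.inv τ) τ γ (G.src_inv τ) h, G.comp_congr_left (G.inv_comp τ),
    G.comp_congr_left h, G.id_comp]

theorem comp_left_cancel {τ γ γ' : Γ} (h : G.src τ = G.tgt γ) (h' : G.src τ = G.tgt γ')
    (heq : G.comp τ γ h = G.comp τ γ' h') : γ = γ' :=
  calc γ = _ := (G.inv_comp_comp τ γ h).symm
    _ = _ := by congr 1
    _ = γ' := G.inv_comp_comp τ γ' h'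

def op : Gpd Γ where
  src := G.tgt
  tgt := G.src
  inv := G.inv
  comp γ δ h := G.comp δ γ h.symm
  src_src := G.tgt_tgt
  tgt_src := G.src_tgt
  src_tgt := G.tgt_src
  tgt_tgt := G.src_src
  src_comp γ δ h := G.tgt_comp δ γ h.symm
  tgt_comp γ δ h := G.src_comp δ γ h.symm
  comp_id := G.id_comp
  id_comp := G.comp_id
  comp_assoc γ δ ε h₁ h₂ := (G.comp_assoc ε δ γ h₂.symm h₁.symm).symm
  src_inv := G.tgt_inv
  tgt_inv := G.src_inv
  inv_inv := G.inv_inv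
  comp_inv := G.inv_comp
  inv_comp := G.comp_inv

theorem isObj_op_iff {e : Γ} : G.op.IsObj e ↔ G.IsObj e := by
  change G.tgt e = e ↔ G.src e = e
  constructor <;> intro h
  · rw [← h, G.src_tgt]
  · rw [← h, G.tgt_src]

end Gpd

namespace GammaMod

variable {Γ : Type u} {G : Gpd Γ} {R : Type v} [NonUnitalRing R] {RG : GammaRing G R}
  {M : Type w} [AddCommGroup M] (Mod : GammaMod RG M)

theorem iSupIndep_grade : iSupIndep Mod.grade := fun γ ↦ disjoint_iff.mpr (Mod.grade_indep γ)

def smulRight (a : R) : M →+ M := AddMonoidHom.mk' (Mod.smul · a) fun m n ↦ Mod.add_smul m n a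

theorem zero_smul (a : R) : Mod.smul 0 a = 0 := (Mod.smulRight a).map_zero

theorem isGamma0Artinian_iff : Mod.IsGamma0Artinian ↔
    ∀ e, G.IsObj e → ChainsStabilizeBelow Mod.IsGradedSub (Mod.eComp e) :=
  Iff.rfl

theorem isGradedSub_bot : Mod.IsGradedSub ⊥ :=
  ⟨fun m hm a ↦ by rw [AddSubgroup.mem_bot.mp hm, Mod.zero_smul]; exact zero_mem _, bot_le⟩

theorem isGradedSub_iSup {ι : Sort*} {S : ι → AddSubgroup M} (hS : ∀ i, Mod.IsGradedSub (S i)) :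
    Mod.IsGradedSub (⨆ i, S i) := by
  refine ⟨fun m hm a ↦ ?_, iSup_le fun i ↦ (hS i).2.trans <|
    iSup_mono fun γ ↦ inf_le_inf_left _ (le_iSup S i)⟩
  exact (iSup_le fun i m hm ↦ le_iSup S i ((hS i).1 m hm a) :
    ⨆ i, S i ≤ (⨆ i, S i).comap (Mod.smulRight a)) hm

theorem isGradedSub_sup {N P : AddSubgroup M} (hN : Mod.IsGradedSub N)
    (hP : Mod.IsGradedSub P) : Mod.IsGradedSub (N ⊔ P) := by
  rw [sup_eq_iSup]
  exact Mod.isGradedSub_iSup (Bool.forall_bool.mpr ⟨hP, hN⟩)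

theorem isGradedSub_inf {N P : AddSubgroup M} (hN : Mod.IsGradedSub N)
    (hP : Mod.IsGradedSub P) : Mod.IsGradedSub (N ⊓ P) := by
  refine ⟨fun m hm a ↦ ⟨hN.1 m hm.1 a, hP.1 m hm.2 a⟩, fun x hx ↦ ?_⟩
  obtain ⟨f, hf, rfl⟩ := (AddSubgroup.mem_iSup_iff_exists_finsupp _ x).mp (hN.2 hx.1)
  have hfP := mem_of_sum_mem_of_iSupIndep Mod.iSupIndep_grade hP.2 (Set.injOn_id _)
    (fun γ _ ↦ (hf γ).1) hx.2
  exact sum_mem fun γ hγ ↦ AddSubgroup.mem_iSup_of_mem γ ⟨(hf γ).1, (hf γ).2, hfP γ hγ⟩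

theorem smul_mem_eComp_tgt {γ : Γ} {m : M} (hm : m ∈ Mod.grade γ) (a : R) :
    Mod.smul m a ∈ Mod.eComp (G.tgt γ) := by
  have ha : a ∈ ⨆ δ, RG.grade δ := RG.grade_iSup ▸ AddSubgroup.mem_top a
  refine (iSup_le fun δ b hb ↦ ?_ : ⨆ δ, RG.grade δ ≤ (Mod.eComp _).comap
    (AddMonoidHom.mk' (Mod.smul m) (Mod.smul_add m))) ha
  by_cases hγδ : G.src γ = G.tgt δ
  · exact AddSubgroup.mem_iSup_of_mem (G.comp γ δ hγδ) <|
      AddSubgroup.mem_iSup_of_mem (G.tgt_comp γ δ hγδ) (Mod.smul_mem γ δ hγδ m b hm hb)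
  · change Mod.smul m b ∈ Mod.eComp (G.tgt γ)
    rw [Mod.smul_ne γ δ hγδ m b hm hb]
    exact zero_mem _

theorem isGradedSub_eComp (e : Γ) : Mod.IsGradedSub (Mod.eComp e) := by
  refine ⟨fun m hm a ↦ ?_, iSup₂_le fun γ hγ x hx ↦
    AddSubgroup.mem_iSup_of_mem γ
      ⟨hx, AddSubgroup.mem_iSup_of_mem γ (AddSubgroup.mem_iSup_of_mem hγ hx)⟩⟩
  exact (iSup₂_le fun γ hγ m hm ↦ hγ ▸ Mod.smul_mem_eComp_tgt hm a :
    Mod.eComp e ≤ (Mod.eComp e).comap (Mod.smulRight a)) hm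

theorem exists_isGrSimpleSub_of_isGamma0Artinian (hM : ∃ m : M, m ≠ 0)
    (hart : Mod.IsGamma0Artinian) : ∃ N, Mod.IsGrSimpleSub N := by
  obtain ⟨γ, hγ⟩ : ∃ γ, Mod.grade γ ≠ ⊥ := by
    by_contra! h
    obtain ⟨m, hm⟩ := hM
    have htop : (⊤ : AddSubgroup M) = ⊥ := by rw [← Mod.grade_iSup, iSup_eq_bot]; exact h
    exact hm (AddSubgroup.mem_bot.mp (htop ▸ AddSubgroup.mem_top m))
  have hE : Mod.eComp (G.tgt γ) ≠ ⊥ :=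
    ne_bot_of_le_ne_bot hγ (le_iSup₂ (f := fun δ (_ : G.tgt δ = G.tgt γ) ↦ Mod.grade δ) γ rfl)
  obtain ⟨N, -, hN⟩ := (Mod.isGamma0Artinian_iff.mp hart _ (G.src_tgt γ)).exists_isAtomAmong_le
    (Mod.isGradedSub_eComp _) hE
  exact ⟨N, hN⟩

def socle : AddSubgroup M := ⨆ (N) (_ : Mod.IsGrSimpleSub N), N

theorem isGrSemisimple_iff_socle_eq_top : Mod.IsGrSemisimple ↔ Mod.socle = ⊤ := Iff.rfl

theorem isGradedSub_socle : Mod.IsGradedSub Mod.socle :=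
  Mod.isGradedSub_iSup fun _ ↦ Mod.isGradedSub_iSup fun hN ↦ hN.1

theorem exists_isGrSimpleSub_of_isGrSemisimple (hM : ∃ m : M, m ≠ 0)
    (hss : Mod.IsGrSemisimple) : ∃ N, Mod.IsGrSimpleSub N := by
  by_contra! h
  obtain ⟨m, hm⟩ := hM
  have hsoc : Mod.socle = ⊥ := iSup₂_eq_bot.mpr fun N hN ↦ (h N hN).elim
  rw [(Mod.isGrSemisimple_iff_socle_eq_top).mp hss] at hsoc
  exact hm (AddSubgroup.mem_bot.mp (hsoc ▸ AddSubgroup.mem_top m))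

theorem IsGrSemisimple.exists_finset {Mod : GammaMod RG M} (hss : Mod.IsGrSemisimple) (x : M) :
    ∃ s : Finset (AddSubgroup M), (∀ N ∈ s, Mod.IsGrSimpleSub N) ∧ x ∈ s.sup id := by
  classical
  have hx : x ∈ ⨆ N : {N // Mod.IsGrSimpleSub N}, N.1 := by
    rw [← iSup_subtype' (f := fun N (_ : Mod.IsGrSimpleSub N) ↦ N)]
    exact hss ▸ AddSubgroup.mem_top x
  obtain ⟨f, hf, rfl⟩ := (AddSubgroup.mem_iSup_iff_exists_finsupp _ x).mp hx
  refine ⟨f.support.map (Function.Embedding.subtype _), fun N hN ↦ ?_, sum_mem fun N hN ↦ ?_⟩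
  · obtain ⟨N', -, rfl⟩ := Finset.mem_map.mp hN
    exact N'.2
  · exact (Finset.le_sup (f := id) (Finset.mem_map_of_mem _ hN) : N.1 ≤ _) (hf N)

end GammaMod

namespace GammaRing

variable {Γ : Type u} {G : Gpd Γ} {R : Type v} [NonUnitalRing R] (RG : GammaRing G R)

theorem exists_mul_mem_grade {τ γ : Γ} {r x : R} (hr : r ∈ RG.grade τ) (hx : x ∈ RG.grade γ) :
    ∃ δ, r * x ∈ RG.grade δ := by
  by_cases h : G.src τ = G.tgt γ
  · exact ⟨_, RG.mul_mem τ γ h r x hr hx⟩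
  · exact ⟨γ, RG.mul_ne τ γ h r x hr hx ▸ zero_mem _⟩

/-- The `r x_γ` are the homogeneous components of `r x`, of pairwise distinct degrees `τγ`. -/
theorem mul_mem_of_mul_sum_mem {P : AddSubgroup R} (hP : P ≤ ⨆ γ, RG.grade γ ⊓ P) {τ : Γ}
    {r : R} (hr : r ∈ RG.grade τ) {f : Γ →₀ R} (hf : ∀ γ, f γ ∈ RG.grade γ)
    (hfP : r * f.sum (fun _ y ↦ y) ∈ P) (γ : Γ) : r * f γ ∈ P := by
  classical
  let t := f.support.filter fun γ ↦ G.src τ = G.tgt γ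
  let g : Γ → Γ := fun γ ↦ if h : G.src τ = G.tgt γ then G.comp τ γ h else γ
  have hcomp : ∀ γ ∈ t, G.src τ = G.tgt γ := fun γ hγ ↦ (Finset.mem_filter.mp hγ).2
  have hg : Set.InjOn g t := fun γ₁ h₁ γ₂ h₂ heq ↦ by
    simp only [g, dif_pos (hcomp γ₁ h₁), dif_pos (hcomp γ₂ h₂)] at heq
    exact G.comp_left_cancel _ _ heq
  have hv : ∀ γ ∈ t, r * f γ ∈ RG.grade (g γ) := fun γ hγ ↦ by
    simp only [g, dif_pos (hcomp γ hγ)]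
    exact RG.mul_mem τ γ _ r (f γ) hr (hf γ)
  have hsum : ∑ γ ∈ t, r * f γ ∈ P := by
    rw [Finset.sum_filter_of_ne fun γ _ hne ↦ by_contra fun h ↦ hne (RG.mul_ne τ γ h r _ hr (hf γ)),
      ← Finset.mul_sum]
    exact hfP
  by_cases hγ : γ ∈ t
  · exact mem_of_sum_mem_of_iSupIndep RG.regular.iSupIndep_grade hP hg hv hsum γ hγ
  · have hzero : r * f γ = 0 := by
      simp only [t, Finset.mem_filter, Finsupp.mem_support_iff, not_and_or, not_not] at hγ
      rcases hγ with h0 | hne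
      · rw [h0, mul_zero]
      · exact RG.mul_ne τ γ hne r (f γ) hr (hf γ)
    exact hzero ▸ zero_mem _

variable {RG}

theorem isGradedSub_map_mulLeft {N : AddSubgroup R} (hN : RG.regular.IsGradedSub N) {τ : Γ}
    {r : R} (hr : r ∈ RG.grade τ) : RG.regular.IsGradedSub (N.map (AddMonoidHom.mulLeft r)) := by
  refine ⟨?_, ?_⟩
  · rintro _ ⟨n, hn, rfl⟩ a
    exact ⟨n * a, hN.1 n hn a, (mul_assoc r n a).symm⟩
  · rintro _ ⟨n, hn, rfl⟩
    obtain ⟨f, hf, rfl⟩ := (AddSubgroup.mem_iSup_iff_exists_finsupp _ n).mp (hN.2 hn)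
    rw [AddMonoidHom.coe_mulLeft, Finsupp.sum, Finset.mul_sum]
    refine sum_mem fun γ _ ↦ ?_
    obtain ⟨δ, hδ⟩ := RG.exists_mul_mem_grade hr (hf γ).1
    exact AddSubgroup.mem_iSup_of_mem δ ⟨hδ, AddSubgroup.mem_map_of_mem _ (hf γ).2⟩

theorem isGradedSub_inf_comap_mulLeft {N P : AddSubgroup R} (hN : RG.regular.IsGradedSub N)
    (hP : RG.regular.IsGradedSub P) {τ : Γ} {r : R} (hr : r ∈ RG.grade τ) :
    RG.regular.IsGradedSub (N ⊓ P.comap (AddMonoidHom.mulLeft r)) := by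
  refine ⟨fun m hm a ↦ ⟨hN.1 m hm.1 a, ?_⟩, fun x hx ↦ ?_⟩
  · change r * (m * a) ∈ P
    rw [← mul_assoc]
    exact hP.1 _ hm.2 a
  · obtain ⟨f, hf, rfl⟩ := (AddSubgroup.mem_iSup_iff_exists_finsupp _ x).mp (hN.2 hx.1)
    have hfP := RG.mul_mem_of_mul_sum_mem hP.2 hr (fun γ ↦ (hf γ).1) hx.2
    exact sum_mem fun γ _ ↦ AddSubgroup.mem_iSup_of_mem γ ⟨(hf γ).1, (hf γ).2, hfP γ⟩

theorem isGrSimpleSub_map_mulLeft {N : AddSubgroup R} (hN : RG.regular.IsGrSimpleSub N)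
    {τ : Γ} {r : R} (hr : r ∈ RG.grade τ) (hne : N.map (AddMonoidHom.mulLeft r) ≠ ⊥) :
    RG.regular.IsGrSimpleSub (N.map (AddMonoidHom.mulLeft r)) := by
  refine ⟨isGradedSub_map_mulLeft hN.1 hr, hne, fun P hP hPle ↦ or_iff_not_imp_left.mpr
    fun hP₀ ↦ le_antisymm hPle ?_⟩
  obtain ⟨_, hnP, hn₀⟩ := (AddSubgroup.bot_or_exists_ne_zero P).resolve_left hP₀
  obtain ⟨n, hn, rfl⟩ := hPle hnP
  have hQ : N ⊓ P.comap (AddMonoidHom.mulLeft r) = N := by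
    refine (hN.2.2 _ (isGradedSub_inf_comap_mulLeft hN.1 hP hr) inf_le_left).resolve_left ?_
    refine AddSubgroup.ne_bot_iff_exists_ne_zero.mpr ⟨⟨n, hn, hnP⟩, fun h ↦ hn₀ ?_⟩
    rw [show n = 0 from congrArg Subtype.val h, map_zero]
  exact AddSubgroup.map_le_iff_le_comap.mpr (inf_eq_left.mp hQ)

theorem map_mulLeft_le_socle {N : AddSubgroup R} (hN : RG.regular.IsGrSimpleSub N) {τ : Γ}
    {r : R} (hr : r ∈ RG.grade τ) : N.map (AddMonoidHom.mulLeft r) ≤ RG.regular.socle := by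
  by_cases h : N.map (AddMonoidHom.mulLeft r) = ⊥
  · exact h ▸ bot_le
  · exact le_iSup₂ (f := fun N (_ : RG.regular.IsGrSimpleSub N) ↦ N) _
      (isGrSimpleSub_map_mulLeft hN hr h)

theorem mul_mem_socle (r : R) {x : R} (hx : x ∈ RG.regular.socle) :
    r * x ∈ RG.regular.socle := by
  have hr : r ∈ ⨆ τ, RG.grade τ := RG.grade_iSup ▸ AddSubgroup.mem_top r
  refine (iSup_le fun τ r hr ↦ ?_ :
    ⨆ τ, RG.grade τ ≤ RG.regular.socle.comap (AddMonoidHom.mulRight x)) hr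
  exact (iSup₂_le fun N hN ↦ AddSubgroup.map_le_iff_le_comap.mp (map_mulLeft_le_socle hN hr) :
    RG.regular.socle ≤ RG.regular.socle.comap (AddMonoidHom.mulLeft r)) hx

theorem isGradedIdeal_socle : RG.IsGradedIdeal RG.regular.socle :=
  ⟨fun _ ha r ↦ ⟨RG.regular.isGradedSub_socle.1 _ ha r, mul_mem_socle r ha⟩,
    RG.regular.isGradedSub_socle.2⟩

theorem IsGrSimpleRing.isRightGrSemisimple (hs : RG.IsGrSimpleRing) {N : AddSubgroup R}
    (hN : RG.regular.IsGrSimpleSub N) : RG.IsRightGrSemisimple :=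
  (hs.2 _ isGradedIdeal_socle).resolve_left fun h ↦ hN.2.1 <| le_bot_iff.mp <|
    h ▸ le_iSup₂ (f := fun N (_ : RG.regular.IsGrSimpleSub N) ↦ N) N hN

theorem one_mul_of_mem_eComp {e : Γ} {x : R} (hx : x ∈ RG.regular.eComp e) :
    RG.one e * x = x := by
  have : RG.regular.eComp e ≤ (AddMonoidHom.mulLeft (RG.one e) - AddMonoidHom.id R).ker :=
    iSup₂_le fun γ hγ x hx ↦ by
      simp [AddMonoidHom.mem_ker, ← hγ, RG.one_mul' γ x hx]
  exact sub_eq_zero.mp (this hx)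

theorem eComp_le_of_one_mem {e : Γ} {T : AddSubgroup R} (hT : RG.regular.IsGradedSub T)
    (h1 : RG.one e ∈ T) : RG.regular.eComp e ≤ T :=
  fun x hx ↦ one_mul_of_mem_eComp hx ▸ hT.1 _ h1 x

theorem IsRightGrSemisimple.isRightGamma0Artinian (hss : RG.IsRightGrSemisimple) :
    RG.IsRightGamma0Artinian := by
  refine RG.regular.isGamma0Artinian_iff.mpr fun e _ ↦ ?_
  obtain ⟨s, hs, h1⟩ := GammaMod.IsGrSemisimple.exists_finset hss (RG.one e)
  have hT : RG.regular.IsGradedSub (s.sup id) := Finset.sup_induction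
    RG.regular.isGradedSub_bot (fun _ h _ h' ↦ RG.regular.isGradedSub_sup h h')
    fun N hN ↦ (hs N hN).1
  exact (chainsStabilizeBelow_finsetSup RG.regular.isGradedSub_bot
    (fun _ _ ↦ RG.regular.isGradedSub_inf) (fun _ _ ↦ RG.regular.isGradedSub_sup) s id hs).mono
    (eComp_le_of_one_mem hT h1)

theorem IsGrSimpleRing.isRightGrSemisimple_tfae (hs : RG.IsGrSimpleRing) :
    (RG.IsRightGrSemisimple ↔ RG.IsRightGamma0Artinian) ∧
      (RG.IsRightGrSemisimple ↔ ∃ N : AddSubgroup R, RG.regular.IsGrSimpleSub N) := by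
  have hmin : (∃ N, RG.regular.IsGrSimpleSub N) → RG.IsRightGrSemisimple :=
    fun ⟨_, hN⟩ ↦ hs.isRightGrSemisimple hN
  exact ⟨⟨IsRightGrSemisimple.isRightGamma0Artinian,
      fun h ↦ hmin (RG.regular.exists_isGrSimpleSub_of_isGamma0Artinian hs.1 h)⟩,
    ⟨RG.regular.exists_isGrSimpleSub_of_isGrSemisimple hs.1, hmin⟩⟩

end GammaRing

def AddSubgroup.toMulOpposite {R : Type*} [AddGroup R] : AddSubgroup R ≃o AddSubgroup Rᵐᵒᵖ :=
  (MulOpposite.opAddEquiv : R ≃+ Rᵐᵒᵖ).mapAddSubgroup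

theorem AddSubgroup.mem_toMulOpposite {R : Type*} [AddGroup R] {N : AddSubgroup R} {x : Rᵐᵒᵖ} :
    x ∈ AddSubgroup.toMulOpposite N ↔ x.unop ∈ N :=
  AddSubgroup.mem_map_equiv

namespace GammaRing

open AddSubgroup (toMulOpposite mem_toMulOpposite)

variable {Γ : Type u} {G : Gpd Γ} {R : Type v} [NonUnitalRing R] (RG : GammaRing G R)

def op : GammaRing G.op Rᵐᵒᵖ where
  grade γ := toMulOpposite (RG.grade γ)
  grade_iSup := by rw [← map_iSup, RG.grade_iSup, map_top]
  grade_indep γ := by rw [← map_iSup₂, ← map_inf, RG.grade_indep, map_bot]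
  mul_mem γ δ h a b ha hb := mem_toMulOpposite.mpr
    (RG.mul_mem δ γ h.symm _ _ (mem_toMulOpposite.mp hb) (mem_toMulOpposite.mp ha))
  mul_ne γ δ h a b ha hb := MulOpposite.unop_injective
    (RG.mul_ne δ γ (Ne.symm h) _ _ (mem_toMulOpposite.mp hb) (mem_toMulOpposite.mp ha))
  one e := MulOpposite.op (RG.one e)
  one_mem e he := mem_toMulOpposite.mpr (RG.one_mem e (G.isObj_op_iff.mp he))
  one_mul' γ a ha := MulOpposite.unop_injective (RG.mul_one' γ a.unop (mem_toMulOpposite.mp ha))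
  mul_one' γ a ha := MulOpposite.unop_injective (RG.one_mul' γ a.unop (mem_toMulOpposite.mp ha))

theorem op_regular_isGradedSub_iff (N : AddSubgroup R) :
    RG.op.regular.IsGradedSub (toMulOpposite N) ↔ RG.leftRegular.IsGradedSub N := by
  refine and_congr ?_ ?_
  · simp only [MulOpposite.forall, mem_toMulOpposite]
    rfl
  · change toMulOpposite N ≤ ⨆ γ, toMulOpposite (RG.grade γ) ⊓ toMulOpposite N ↔ _
    simp only [← map_inf, ← map_iSup, OrderIso.le_iff_le]
    rfl

theorem op_regular_isGrSimpleSub_iff (N : AddSubgroup R) :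
    RG.op.regular.IsGrSimpleSub (toMulOpposite N) ↔ RG.leftRegular.IsGrSimpleSub N :=
  toMulOpposite.isAtomAmong_apply_iff RG.op_regular_isGradedSub_iff N

theorem isRightGrSemisimple_op_iff : RG.op.IsRightGrSemisimple ↔ RG.IsLeftGrSemisimple := by
  change _ = ⊤ ↔ _ = ⊤
  rw [toMulOpposite.iSup_pred_eq_apply RG.op_regular_isGrSimpleSub_iff, map_eq_top_iff]

theorem isRightGamma0Artinian_op_iff : RG.op.IsRightGamma0Artinian ↔ RG.IsLeftGamma0Artinian := by
  have hE : ∀ e, RG.op.regular.eComp e = toMulOpposite (RG.leftRegular.lComp e) := fun e ↦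
    (map_iSup₂ toMulOpposite _).symm
  refine RG.op.regular.isGamma0Artinian_iff.trans <| forall_congr' fun e ↦
    imp_congr G.isObj_op_iff ?_
  rw [hE, toMulOpposite.chainsStabilizeBelow_apply_iff RG.op_regular_isGradedSub_iff]
  rfl

theorem exists_op_regular_isGrSimpleSub_iff :
    (∃ N, RG.op.regular.IsGrSimpleSub N) ↔ ∃ N, RG.leftRegular.IsGrSimpleSub N :=
  (toMulOpposite.toEquiv.exists_congr fun N ↦ (RG.op_regular_isGrSimpleSub_iff N).symm).symm

theorem op_isGradedIdeal_iff (I : AddSubgroup R) :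
    RG.op.IsGradedIdeal (toMulOpposite I) ↔ RG.IsGradedIdeal I := by
  refine and_congr ?_ ?_
  · simp only [MulOpposite.forall, mem_toMulOpposite, MulOpposite.unop_mul, MulOpposite.unop_op]
    exact forall₂_congr fun _ _ ↦ forall_congr' fun _ ↦ and_comm
  · change toMulOpposite I ≤ ⨆ γ, toMulOpposite (RG.grade γ) ⊓ toMulOpposite I ↔ _
    simp only [← map_inf, ← map_iSup, OrderIso.le_iff_le]

variable {RG}

theorem IsGrSimpleRing.op (hs : RG.IsGrSimpleRing) : RG.op.IsGrSimpleRing := by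
  obtain ⟨⟨a, ha⟩, hideal⟩ := hs
  refine ⟨⟨MulOpposite.op a, (MulOpposite.op_eq_zero_iff a).not.mpr ha⟩, fun I hI ↦ ?_⟩
  rw [← toMulOpposite.apply_symm_apply I] at hI ⊢
  rcases hideal _ ((RG.op_isGradedIdeal_iff _).mp hI) with h | h <;> rw [h]
  exacts [Or.inl (map_bot _), Or.inr (map_top _)]

end GammaRing

/-- Let `R` be a gr-simple object unital `Γ`-graded ring.  The
following are equivalent: (1) `R` is right gr-semisimple; (2) `R` is right
`Γ₀`-artinian; (3) `R` has a minimal graded right ideal.  Moreover the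
corresponding left-sided statements are also equivalent to each other. -/
theorem grSimple_semisimple_artinian_minimal_tfae
    {Γ : Type u} (G : Gpd Γ) {R : Type v} [NonUnitalRing R] (RG : GammaRing G R)
    (hs : RG.IsGrSimpleRing) :
    ((RG.IsRightGrSemisimple ↔ RG.IsRightGamma0Artinian) ∧
      (RG.IsRightGrSemisimple ↔ ∃ N : AddSubgroup R, RG.regular.IsGrSimpleSub N)) ∧
    ((RG.IsLeftGrSemisimple ↔ RG.IsLeftGamma0Artinian) ∧
      (RG.IsLeftGrSemisimple ↔ ∃ N : AddSubgroup R, RG.leftRegular.IsGrSimpleSub N)) := by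
  refine ⟨hs.isRightGrSemisimple_tfae, ?_⟩
  rw [← RG.isRightGrSemisimple_op_iff, ← RG.isRightGamma0Artinian_op_iff,
    ← RG.exists_op_regular_isGrSimpleSub_iff]
  exact hs.op.isRightGrSemisimple_tfae
end

section
/- Let Γ be a groupoid and D a Γ-graded division ring. Define the gr-primality relation on Γ'₀(D) := {e ∈ Γ₀ : 1_e ≠ 0} by e ∼ f iff 1_eD1_f ≠ 0. Then: (1) ∼ is an equivalence relation on Γ'₀(D); (2) for each equivalence class [e], setting Γ_{[e]} := {γ ∈ Γ : d(γ), r(γ) ∈ [e]} and D_{[e]} := ⊕_{γ∈Γ_{[e]}} D_γ, the set D_{[e]} is a nonzero graded ideal of D and D_{[e]}D_{[f]} = 0 for distinct classes [e] ≠ [f]; (3) D = ⊕_{[e]∈Γ'₀(D)/∼} D_{[e]} and each D_{[e]} is a gr-simple gr-division ring; (4) D is gr-prime if and only if D is gr-simple, if and only if Γ'₀(D)/∼ has exactly one equivalence class. -/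
/-!
Since nonzero homogeneous elements are invertible, for objects `e, f` the condition
`1_e D 1_f ≠ 0` says that some morphism `f → e` carries a nonzero component of `D`; inverses
and products of such components make `∼` symmetric and transitive. A component of degree `γ`
lies in `D_{[e]}` as soon as `r(γ) ∼ e`, which makes `D_{[e]}` a graded ideal; components from
different classes multiply to zero, and the local units `1_g` separate the classes, so the sum
is direct. A nonzero graded ideal of `D_{[e]}` contains some `p p⁻¹ = 1_g`, and conjugating by
nonzero components joining `g` to the other objects of the class produces all units of the
class, hence all of `D_{[e]}`. Applied to `D = D_{[e]}` this characterises gr-simplicity, and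
two distinct classes give two nonzero graded ideals with zero product.
-/

set_option autoImplicit false

universe u v w x y

namespace Gpd

variable {Γ : Type u} (G : Gpd Γ)

theorem isObj_src (γ : Γ) : G.IsObj (G.src γ) := G.src_src γ

theorem isObj_tgt (γ : Γ) : G.IsObj (G.tgt γ) := G.src_tgt γ

variable {G}

theorem IsObj.src_eq {e : Γ} (he : G.IsObj e) : G.src e = e := he

theorem IsObj.tgt_eq {e : Γ} (he : G.IsObj e) : G.tgt e = e := by
  rw [← he, G.tgt_src]

end Gpd

namespace GammaRing

variable {Γ : Type u} {G : Gpd Γ} {D : Type v} [NonUnitalRing D] {DG : GammaRing G D}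

theorem one_mul_eq_zero_of_ne {e γ : Γ} (he : G.IsObj e) (h : e ≠ G.tgt γ) {a : D}
    (ha : a ∈ DG.grade γ) : DG.one e * a = 0 :=
  DG.mul_ne e γ (he.symm ▸ h) _ a (DG.one_mem e he) ha

theorem mul_one_eq_zero_of_ne {e γ : Γ} (he : G.IsObj e) (h : G.src γ ≠ e) {a : D}
    (ha : a ∈ DG.grade γ) : a * DG.one e = 0 :=
  DG.mul_ne γ e (he.tgt_eq.symm ▸ h) a _ ha (DG.one_mem e he)

theorem one_mul_one {e : Γ} (he : G.IsObj e) : DG.one e * DG.one e = DG.one e := by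
  simpa only [he.tgt_eq] using DG.one_mul' e _ (DG.one_mem e he)

theorem one_tgt_ne_zero {γ : Γ} {a : D} (ha : a ∈ DG.grade γ) (ha0 : a ≠ 0) :
    DG.one (G.tgt γ) ≠ 0 :=
  fun h => ha0 (by rw [← DG.one_mul' γ a ha, h, zero_mul])

theorem one_src_ne_zero {γ : Γ} {a : D} (ha : a ∈ DG.grade γ) (ha0 : a ≠ 0) :
    DG.one (G.src γ) ≠ 0 :=
  fun h => ha0 (by rw [← DG.mul_one' γ a ha, h, mul_zero])

variable (DG) in
theorem mem_iSup_grade (x : D) : x ∈ ⨆ γ, DG.grade γ :=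
  DG.grade_iSup ▸ AddSubgroup.mem_top x

variable (DG) in
@[elab_as_elim]
theorem grade_induction {motive : D → Prop} (x : D)
    (mem : ∀ γ, ∀ a ∈ DG.grade γ, motive a) (zero : motive 0)
    (add : ∀ a b, motive a → motive b → motive (a + b)) : motive x :=
  AddSubgroup.iSup_induction (C := motive) _ (DG.mem_iSup_grade x) mem zero add

open scoped Classical in
theorem sum_one_mul_of_mem_grade {S : Finset Γ} (hS : ∀ g ∈ S, G.IsObj g) {γ : Γ} {a : D}
    (ha : a ∈ DG.grade γ) : (∑ g ∈ S, DG.one g) * a = if G.tgt γ ∈ S then a else 0 := by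
  rw [Finset.sum_mul, ← Finset.sum_ite_eq' S (G.tgt γ) fun _ => a]
  refine Finset.sum_congr rfl fun g hg => ?_
  split_ifs with hg'
  · exact hg' ▸ DG.one_mul' γ a ha
  · exact one_mul_eq_zero_of_ne (hS g hg) hg' ha

theorem exists_sum_one_mul_eq (x : D) : ∃ S : Finset Γ, (∀ g ∈ S, G.IsObj g) ∧
    ∀ T : Finset Γ, S ⊆ T → (∀ g ∈ T, G.IsObj g) → (∑ g ∈ T, DG.one g) * x = x := by
  classical
  induction x using DG.grade_induction with
  | zero => exact ⟨∅, by simp, fun _ _ _ => mul_zero _⟩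
  | mem γ a ha =>
    refine ⟨{G.tgt γ}, by simpa using G.isObj_tgt γ, fun T hT hTobj => ?_⟩
    rw [sum_one_mul_of_mem_grade hTobj ha, if_pos (Finset.singleton_subset_iff.mp hT)]
  | add a b hSa hS'b =>
    obtain ⟨S, hSobj, hS⟩ := hSa
    obtain ⟨S', hS'obj, hS'⟩ := hS'b
    refine ⟨S ∪ S', fun g hg => (Finset.mem_union.mp hg).elim (hSobj g) (hS'obj g),
      fun T hT hTobj => ?_⟩
    rw [mul_add, hS T (Finset.union_subset_left hT) hTobj,
      hS' T (Finset.union_subset_right hT) hTobj]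

theorem eq_zero_of_forall_one_mul_eq_zero {x : D}
    (h : ∀ g : Γ, G.IsObj g → DG.one g * x = 0) : x = 0 := by
  obtain ⟨S, hSobj, hS⟩ := exists_sum_one_mul_eq (DG := DG) x
  rw [← hS S le_rfl hSobj, Finset.sum_mul]
  exact Finset.sum_eq_zero fun g hg => h g (hSobj g hg)

theorem exists_mem_grade_ne_zero {P : AddSubgroup D} (hgr : P ≤ ⨆ γ, DG.grade γ ⊓ P)
    (hP : P ≠ ⊥) : ∃ γ, ∃ a ∈ DG.grade γ, a ∈ P ∧ a ≠ 0 := by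
  by_contra! h
  exact hP (eq_bot_iff.mpr (hgr.trans (iSup_le fun γ a ha =>
    AddSubgroup.mem_bot.mpr (h γ a ha.1 ha.2))))

theorem exists_isObj_one_ne_zero (h : ∃ a : D, a ≠ 0) :
    ∃ e : Γ, G.IsObj e ∧ DG.one e ≠ 0 := by
  have htop : (⊤ : AddSubgroup D) ≤ ⨆ γ, DG.grade γ ⊓ ⊤ := by simp [DG.grade_iSup]
  obtain ⟨x, hx⟩ := h
  obtain ⟨γ, a, ha, -, ha0⟩ := exists_mem_grade_ne_zero htop fun hbot =>
    hx (AddSubgroup.mem_bot.mp (hbot ▸ AddSubgroup.mem_top x))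
  exact ⟨G.tgt γ, G.isObj_tgt γ, one_tgt_ne_zero ha ha0⟩

end GammaRing

section GrPrimRel

variable {Γ : Type u} {G : Gpd Γ} {D : Type v} [NonUnitalRing D] {DG : GammaRing G D}

open GammaRing

theorem grPrimRel_of_mem_grade {γ : Γ} {a : D} (ha : a ∈ DG.grade γ) (ha0 : a ≠ 0) :
    GrPrimRel G DG (G.tgt γ) (G.src γ) :=
  ⟨a, by rwa [DG.one_mul' γ a ha, DG.mul_one' γ a ha]⟩

theorem grPrimRel_refl {e : Γ} (he : G.IsObj e) (h0 : DG.one e ≠ 0) : GrPrimRel G DG e e :=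
  ⟨DG.one e, by rwa [one_mul_one he, one_mul_one he]⟩

theorem exists_mem_grade_of_grPrimRel {e f : Γ} (he : G.IsObj e) (hf : G.IsObj f)
    (h : GrPrimRel G DG e f) :
    ∃ γ, G.tgt γ = e ∧ G.src γ = f ∧ ∃ a ∈ DG.grade γ, a ≠ 0 := by
  by_contra! hne
  obtain ⟨x, hx⟩ := h
  let φ := (AddMonoidHom.mulRight (DG.one f)).comp (AddMonoidHom.mulLeft (DG.one e))
  have hker : ⨆ γ, DG.grade γ ≤ φ.ker := iSup_le fun γ a ha => by
    change DG.one e * a * DG.one f = 0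
    by_cases het : e = G.tgt γ
    · by_cases hfs : G.src γ = f
      · rw [hne γ het.symm hfs a ha, mul_zero, zero_mul]
      · rw [het, DG.one_mul' γ a ha, mul_one_eq_zero_of_ne hf hfs ha]
    · rw [one_mul_eq_zero_of_ne he het ha, zero_mul]
  exact hx (hker (DG.mem_iSup_grade x))

namespace GammaRing.IsGrDivision

variable (hdiv : DG.IsGrDivision)
include hdiv

theorem mul_ne_zero {γ δ : Γ} (h : G.src γ = G.tgt δ) {a c : D} (ha : a ∈ DG.grade γ)
    (ha0 : a ≠ 0) (hc : c ∈ DG.grade δ) (hc0 : c ≠ 0) : a * c ≠ 0 := by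
  obtain ⟨b, -, -, hba⟩ := hdiv.2 γ a ha ha0
  intro hac
  apply hc0
  rw [← DG.one_mul' δ c hc, ← h, ← hba, mul_assoc, hac, mul_zero]

theorem grPrimRel_symm {e f : Γ} (he : G.IsObj e) (hf : G.IsObj f)
    (h : GrPrimRel G DG e f) : GrPrimRel G DG f e := by
  obtain ⟨γ, rfl, rfl, a, ha, ha0⟩ := exists_mem_grade_of_grPrimRel he hf h
  obtain ⟨b, hb, hab, -⟩ := hdiv.2 γ a ha ha0
  have hb0 : b ≠ 0 := fun hb0 => one_tgt_ne_zero ha ha0 (by rw [← hab, hb0, mul_zero])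
  simpa only [G.tgt_inv, G.src_inv] using grPrimRel_of_mem_grade hb hb0

theorem grPrimRel_trans {e f g : Γ} (he : G.IsObj e) (hf : G.IsObj f) (hg : G.IsObj g)
    (h₁ : GrPrimRel G DG e f) (h₂ : GrPrimRel G DG f g) : GrPrimRel G DG e g := by
  obtain ⟨γ, rfl, hγ, a, ha, ha0⟩ := exists_mem_grade_of_grPrimRel he hf h₁
  obtain ⟨δ, hδ, rfl, c, hc, hc0⟩ := exists_mem_grade_of_grPrimRel hf hg h₂
  have h : G.src γ = G.tgt δ := hγ.trans hδ.symm
  simpa only [G.tgt_comp, G.src_comp] using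
    grPrimRel_of_mem_grade (DG.mul_mem γ δ h a c ha hc) (hdiv.mul_ne_zero h ha ha0 hc hc0)

end GammaRing.IsGrDivision

end GrPrimRel

theorem AddSubgroup.mul_mem_of_mem_iSup₂ {R : Type*} [NonUnitalRing R] {ι κ : Type*}
    {p : ι → Prop} {q : κ → Prop} {S : ι → AddSubgroup R} {T : κ → AddSubgroup R}
    {N : AddSubgroup R} (h : ∀ i, p i → ∀ j, q j → ∀ a ∈ S i, ∀ b ∈ T j, a * b ∈ N) {a b : R}
    (ha : a ∈ ⨆ (i) (_ : p i), S i) (hb : b ∈ ⨆ (j) (_ : q j), T j) : a * b ∈ N := by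
  have key : ∀ i, p i → ∀ a ∈ S i, a * b ∈ N := fun i hi a ha =>
    (iSup₂_le fun j hj b hb => h i hi j hj a ha b hb :
      ⨆ (j) (_ : q j), T j ≤ N.comap (AddMonoidHom.mulLeft a)) hb
  exact (iSup₂_le key : ⨆ (i) (_ : p i), S i ≤ N.comap (AddMonoidHom.mulRight b)) ha

section ClassIdeal

variable {Γ : Type u} {G : Gpd Γ} {D : Type v} [NonUnitalRing D] {DG : GammaRing G D}

open GammaRing

theorem grade_le_classIdeal {e γ : Γ} (h₁ : GrPrimRel G DG (G.tgt γ) e)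
    (h₂ : GrPrimRel G DG (G.src γ) e) : DG.grade γ ≤ ClassIdeal G DG e :=
  le_iSup₂ (f := fun γ _ => DG.grade γ) γ ⟨h₁, h₂⟩

theorem one_mem_classIdeal {e g : Γ} (hg : G.IsObj g) (h : GrPrimRel G DG g e) :
    DG.one g ∈ ClassIdeal G DG e :=
  grade_le_classIdeal (by rwa [hg.tgt_eq]) (by rwa [hg.src_eq]) (DG.one_mem g hg)

theorem classIdeal_ne_bot {e : Γ} (he : G.IsObj e) (h0 : DG.one e ≠ 0) :
    ClassIdeal G DG e ≠ ⊥ := fun hbot =>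
  h0 (AddSubgroup.mem_bot.mp (hbot ▸ one_mem_classIdeal he (grPrimRel_refl he h0)))

theorem one_mul_eq_zero_of_mem_classIdeal {e g : Γ} (hg : G.IsObj g)
    (h : ¬ GrPrimRel G DG g e) {x : D} (hx : x ∈ ClassIdeal G DG e) : DG.one g * x = 0 :=
  (iSup₂_le fun _ hγ _ ha => one_mul_eq_zero_of_ne hg (fun hgt => h (hgt ▸ hγ.1)) ha :
    ClassIdeal G DG e ≤ (AddMonoidHom.mulLeft (DG.one g)).ker) hx

theorem iSup_classIdeal_eq_top :
    (⨆ (e : Γ) (_ : G.IsObj e ∧ DG.one e ≠ 0), ClassIdeal G DG e) = ⊤ := by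
  refine eq_top_iff.mpr (DG.grade_iSup ▸ iSup_le fun γ a ha => ?_)
  rcases eq_or_ne a 0 with rfl | ha0
  · exact zero_mem _
  have h0 := one_src_ne_zero ha ha0
  refine le_iSup₂ (f := fun e (_ : G.IsObj e ∧ DG.one e ≠ 0) => ClassIdeal G DG e) (G.src γ)
    ⟨G.isObj_src γ, h0⟩ (grade_le_classIdeal (grPrimRel_of_mem_grade ha ha0) ?_ ha)
  exact grPrimRel_refl (G.isObj_src γ) h0

theorem classIdeal_eq_top (h : ∀ e f : Γ, G.IsObj e → G.IsObj f → DG.one e ≠ 0 →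
      DG.one f ≠ 0 → GrPrimRel G DG e f) {e : Γ} (he : G.IsObj e) (h0 : DG.one e ≠ 0) :
    ClassIdeal G DG e = ⊤ := by
  refine eq_top_iff.mpr (DG.grade_iSup ▸ iSup_le fun γ a ha => ?_)
  rcases eq_or_ne a 0 with rfl | ha0
  · exact zero_mem _
  exact grade_le_classIdeal (h _ e (G.isObj_tgt γ) he (one_tgt_ne_zero ha ha0) h0)
    (h _ e (G.isObj_src γ) he (one_src_ne_zero ha ha0) h0) ha

namespace GammaRing.IsGrDivision

variable (hdiv : DG.IsGrDivision)
include hdiv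

theorem mem_classIdeal_of_grPrimRel_tgt {e γ : Γ} (he : G.IsObj e) {a : D}
    (ha : a ∈ DG.grade γ) (h : GrPrimRel G DG (G.tgt γ) e) : a ∈ ClassIdeal G DG e := by
  rcases eq_or_ne a 0 with rfl | ha0
  · exact zero_mem _
  refine grade_le_classIdeal h (hdiv.grPrimRel_trans (G.isObj_src γ) (G.isObj_tgt γ) he ?_ h) ha
  exact hdiv.grPrimRel_symm (G.isObj_tgt γ) (G.isObj_src γ) (grPrimRel_of_mem_grade ha ha0)

theorem mem_classIdeal_of_grPrimRel_src {e γ : Γ} (he : G.IsObj e) {a : D}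
    (ha : a ∈ DG.grade γ) (h : GrPrimRel G DG (G.src γ) e) : a ∈ ClassIdeal G DG e := by
  rcases eq_or_ne a 0 with rfl | ha0
  · exact zero_mem _
  exact grade_le_classIdeal (hdiv.grPrimRel_trans (G.isObj_tgt γ) (G.isObj_src γ) he
    (grPrimRel_of_mem_grade ha ha0) h) h ha

theorem grPrimRel_of_mem_classIdeal {e γ : Γ} (he : G.IsObj e) {a : D}
    (ha : a ∈ DG.grade γ) (haC : a ∈ ClassIdeal G DG e) (ha0 : a ≠ 0) :
    GrPrimRel G DG (G.tgt γ) e ∧ GrPrimRel G DG (G.src γ) e := by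
  have htgt : GrPrimRel G DG (G.tgt γ) e := by
    by_contra h
    exact ha0 (DG.one_mul' γ a ha ▸ one_mul_eq_zero_of_mem_classIdeal (G.isObj_tgt γ) h haC)
  refine ⟨htgt, hdiv.grPrimRel_trans (G.isObj_src γ) (G.isObj_tgt γ) he ?_ htgt⟩
  exact hdiv.grPrimRel_symm (G.isObj_tgt γ) (G.isObj_src γ) (grPrimRel_of_mem_grade ha ha0)

theorem isGradedIdeal_classIdeal {e : Γ} (he : G.IsObj e) :
    DG.IsGradedIdeal (ClassIdeal G DG e) := by
  have hall (r : D) : r ∈ ⨆ (δ : Γ) (_ : True), DG.grade δ := by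
    simpa only [iSup_pos] using DG.mem_iSup_grade r
  refine ⟨fun a ha r => ⟨AddSubgroup.mul_mem_of_mem_iSup₂ ?_ ha (hall r),
    AddSubgroup.mul_mem_of_mem_iSup₂ ?_ (hall r) ha⟩, ?_⟩
  · rintro γ hγ δ - a ha x hx
    by_cases h : G.src γ = G.tgt δ
    · exact hdiv.mem_classIdeal_of_grPrimRel_tgt he (DG.mul_mem γ δ h a x ha hx)
        (by rw [G.tgt_comp]; exact hγ.1)
    · exact DG.mul_ne γ δ h a x ha hx ▸ zero_mem _
  · rintro δ - γ hγ x hx a ha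
    by_cases h : G.src δ = G.tgt γ
    · exact hdiv.mem_classIdeal_of_grPrimRel_src he (DG.mul_mem δ γ h x a hx ha)
        (by rw [G.src_comp]; exact hγ.2)
    · exact DG.mul_ne δ γ h x a hx ha ▸ zero_mem _
  · exact iSup₂_le fun γ hγ =>
      le_iSup_of_le γ (le_inf le_rfl (grade_le_classIdeal hγ.1 hγ.2))

theorem classIdeal_mul_eq_zero {e f : Γ} (he : G.IsObj e) (hf : G.IsObj f)
    (hef : ¬ GrPrimRel G DG e f) {a b : D} (ha : a ∈ ClassIdeal G DG e)
    (hb : b ∈ ClassIdeal G DG f) : a * b = 0 := by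
  refine AddSubgroup.mem_bot.mp
    (AddSubgroup.mul_mem_of_mem_iSup₂ (fun γ hγ δ hδ a ha b hb => ?_) ha hb)
  by_cases h : G.src γ = G.tgt δ
  · refine absurd (hdiv.grPrimRel_trans he (G.isObj_src γ) hf ?_ (h ▸ hδ.1)) hef
    exact hdiv.grPrimRel_symm (G.isObj_src γ) he hγ.2
  · exact DG.mul_ne γ δ h a b ha hb ▸ zero_mem _

theorem classIdeal_inf_iSup_eq_bot {e : Γ} (he : G.IsObj e) :
    ClassIdeal G DG e ⊓
      (⨆ (f : Γ) (_ : (G.IsObj f ∧ DG.one f ≠ 0) ∧ ¬ GrPrimRel G DG e f),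
        ClassIdeal G DG f) = ⊥ := by
  refine eq_bot_iff.mpr fun x hx => AddSubgroup.mem_bot.mpr
    (eq_zero_of_forall_one_mul_eq_zero (DG := DG) fun g hg => ?_)
  obtain ⟨hxe, hxf⟩ := AddSubgroup.mem_inf.mp hx
  by_cases hge : GrPrimRel G DG g e
  · refine (iSup₂_le fun f hf y hy => one_mul_eq_zero_of_mem_classIdeal hg
      (fun hgf => hf.2 (hdiv.grPrimRel_trans he hg hf.1.1 ?_ hgf)) hy :
        _ ≤ (AddMonoidHom.mulLeft (DG.one g)).ker) hxf
    exact hdiv.grPrimRel_symm hg he hge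
  · exact one_mul_eq_zero_of_mem_classIdeal hg hge hxe

theorem subringGrDivision_classIdeal {e : Γ} (he : G.IsObj e) (h0 : DG.one e ≠ 0) :
    DG.SubringGrDivision (ClassIdeal G DG e) := by
  refine ⟨⟨DG.one e, one_mem_classIdeal he (grPrimRel_refl he h0), h0⟩,
    fun γ a ha haC ha0 => ?_⟩
  obtain ⟨ht, hs⟩ := hdiv.grPrimRel_of_mem_classIdeal he ha haC ha0
  obtain ⟨b, hb, hab, hba⟩ := hdiv.2 γ a ha ha0
  exact ⟨one_mem_classIdeal (G.isObj_tgt γ) ht, one_mem_classIdeal (G.isObj_src γ) hs, b, hb,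
    grade_le_classIdeal (by rwa [G.tgt_inv]) (by rwa [G.src_inv]) hb, hab, hba⟩

theorem subringGrSimple_classIdeal {e : Γ} (he : G.IsObj e) (h0 : DG.one e ≠ 0) :
    DG.SubringGrSimple (ClassIdeal G DG e) := by
  refine ⟨classIdeal_ne_bot he h0, fun P ⟨hPle, hPabs, hPgr⟩ => or_iff_not_imp_left.mpr
    fun hP => le_antisymm hPle ?_⟩
  obtain ⟨γ, p, hp, hpP, hp0⟩ := exists_mem_grade_ne_zero hPgr hP
  have hγ := hdiv.grPrimRel_of_mem_classIdeal he hp (hPle hpP) hp0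
  obtain ⟨p', hp', hpp', -⟩ := hdiv.2 γ p hp hp0
  -- `1_g = c (p p⁻¹) c⁻¹` for a nonzero `c` of some degree `η : r(γ) → g`
  have hone (g : Γ) (hg : G.IsObj g) (hge : GrPrimRel G DG g e) : DG.one g ∈ P := by
    obtain ⟨η, rfl, hη, c, hc, hc0⟩ := exists_mem_grade_of_grPrimRel hg (G.isObj_tgt γ)
      (hdiv.grPrimRel_trans hg he (G.isObj_tgt γ) hge
        (hdiv.grPrimRel_symm (G.isObj_tgt γ) he hγ.1))
    obtain ⟨c', hc', hcc', -⟩ := hdiv.2 η c hc hc0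
    have hc'C : c' ∈ ClassIdeal G DG e :=
      hdiv.mem_classIdeal_of_grPrimRel_src he hc' (by rwa [G.src_inv])
    have hp'C : p' ∈ ClassIdeal G DG e :=
      hdiv.mem_classIdeal_of_grPrimRel_src he hp' (by rw [G.src_inv]; exact hγ.1)
    have hcpc : c * (p * p') * c' = DG.one (G.tgt η) := by
      rw [hpp', ← hη, DG.mul_one' η c hc, hcc']
    rw [← hcpc]
    exact (hPabs _ ((hPabs _ (hPabs p hpP p' hp'C).1 c
      (hdiv.mem_classIdeal_of_grPrimRel_tgt he hc hge)).2) c' hc'C).1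
  exact iSup₂_le fun δ hδ x hx => DG.one_mul' δ x hx ▸
    (hPabs _ (hone _ (G.isObj_tgt δ) hδ.1) x (grade_le_classIdeal hδ.1 hδ.2 hx)).1

theorem isGrSimpleRing_iff : DG.IsGrSimpleRing ↔ ((∃ e : Γ, G.IsObj e ∧ DG.one e ≠ 0) ∧
      ∀ e f : Γ, G.IsObj e → G.IsObj f → DG.one e ≠ 0 → DG.one f ≠ 0 →
        GrPrimRel G DG e f) := by
  constructor
  · intro hs
    refine ⟨exists_isObj_one_ne_zero hs.1, fun e f he hf he0 hf0 => ?_⟩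
    have htop : ClassIdeal G DG f = ⊤ :=
      (hs.2 _ (hdiv.isGradedIdeal_classIdeal hf)).resolve_left (classIdeal_ne_bot hf hf0)
    simpa only [he.tgt_eq] using (hdiv.grPrimRel_of_mem_classIdeal hf (DG.one_mem e he)
      (htop ▸ AddSubgroup.mem_top _) he0).1
  · rintro ⟨⟨e, he, h0⟩, hall⟩
    have hsimple := hdiv.subringGrSimple_classIdeal he h0
    rw [classIdeal_eq_top hall he h0] at hsimple
    exact ⟨hdiv.1, fun I hI => hsimple.2 I ⟨le_top, fun p hp n _ => hI.1 p hp n, hI.2⟩⟩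

theorem isGrPrime_iff_isGrSimpleRing : DG.IsGrPrime ↔ DG.IsGrSimpleRing := by
  constructor
  · intro hp
    refine hdiv.isGrSimpleRing_iff.mpr ⟨exists_isObj_one_ne_zero hp.1,
      fun e f he hf he0 hf0 => ?_⟩
    by_contra hef
    obtain ⟨a, ha, b, hb, hab⟩ := hp.2 _ _ (hdiv.isGradedIdeal_classIdeal he)
      (hdiv.isGradedIdeal_classIdeal hf) (classIdeal_ne_bot he he0) (classIdeal_ne_bot hf hf0)
    exact hab (hdiv.classIdeal_mul_eq_zero he hf hef ha hb)
  · intro hs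
    refine ⟨hdiv.1, fun I J hI hJ hI0 hJ0 => ?_⟩
    rw [(hs.2 I hI).resolve_left hI0, (hs.2 J hJ).resolve_left hJ0]
    obtain ⟨e, he, h0⟩ := exists_isObj_one_ne_zero (DG := DG) hdiv.1
    exact ⟨_, AddSubgroup.mem_top _, _, AddSubgroup.mem_top _, by rwa [one_mul_one he]⟩

end GammaRing.IsGrDivision

end ClassIdeal

/-- decomposition of a graded division ring into gr-simple ones.
Let `D` be a `Γ`-graded division ring, and consider the gr-primality relation
`e ∼ f ⟺ 1_e D 1_f ≠ 0` on `Γ'₀(D) = {e ∈ Γ₀ : 1_e ≠ 0}`.  Then: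
(1) `∼` is an equivalence relation on `Γ'₀(D)`;
(2) each `D_{[e]}` is a nonzero graded ideal of `D`, and `D_{[e]} D_{[f]} = 0` for
    distinct classes;
(3) `D` is the direct sum of the `D_{[e]}`, and each `D_{[e]}` is a gr-simple
    gr-division ring;
(4) `D` is gr-prime iff `D` is gr-simple iff there is exactly one equivalence
    class. -/
theorem graded_division_ring_class_decomposition
    {Γ : Type u} (G : Gpd Γ) {D : Type v} [NonUnitalRing D] (DG : GammaRing G D)
    (hdiv : DG.IsGrDivision) :
    -- (1) equivalence relation on Γ'₀(D)
    ((∀ e : Γ, G.IsObj e → DG.one e ≠ 0 → GrPrimRel G DG e e) ∧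
     (∀ e f : Γ, G.IsObj e → G.IsObj f → DG.one e ≠ 0 → DG.one f ≠ 0 →
        GrPrimRel G DG e f → GrPrimRel G DG f e) ∧
     (∀ e f g : Γ, G.IsObj e → G.IsObj f → G.IsObj g →
        DG.one e ≠ 0 → DG.one f ≠ 0 → DG.one g ≠ 0 →
        GrPrimRel G DG e f → GrPrimRel G DG f g → GrPrimRel G DG e g)) ∧
    -- (2)
    ((∀ e : Γ, G.IsObj e → DG.one e ≠ 0 →
        ClassIdeal G DG e ≠ ⊥ ∧ DG.IsGradedIdeal (ClassIdeal G DG e)) ∧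
     (∀ e f : Γ, G.IsObj e → G.IsObj f → DG.one e ≠ 0 → DG.one f ≠ 0 →
        ¬ GrPrimRel G DG e f →
        ∀ a ∈ ClassIdeal G DG e, ∀ b ∈ ClassIdeal G DG f, a * b = 0)) ∧
    -- (3)
    ((⨆ (e : Γ) (_ : G.IsObj e ∧ DG.one e ≠ 0), ClassIdeal G DG e) = ⊤ ∧
     (∀ e : Γ, G.IsObj e → DG.one e ≠ 0 →
        ClassIdeal G DG e ⊓
          (⨆ (f : Γ) (_ : (G.IsObj f ∧ DG.one f ≠ 0) ∧ ¬ GrPrimRel G DG e f),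
            ClassIdeal G DG f) = ⊥) ∧
     (∀ e : Γ, G.IsObj e → DG.one e ≠ 0 →
        DG.SubringGrSimple (ClassIdeal G DG e) ∧
          DG.SubringGrDivision (ClassIdeal G DG e))) ∧
    -- (4)
    ((DG.IsGrPrime ↔ DG.IsGrSimpleRing) ∧
     (DG.IsGrSimpleRing ↔ ((∃ e : Γ, G.IsObj e ∧ DG.one e ≠ 0) ∧
        ∀ e f : Γ, G.IsObj e → G.IsObj f → DG.one e ≠ 0 → DG.one f ≠ 0 →
          GrPrimRel G DG e f))) := by
  exact ⟨⟨fun e he h0 => grPrimRel_refl he h0,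
      fun e f he hf _ _ => hdiv.grPrimRel_symm he hf,
      fun e f g he hf hg _ _ _ => hdiv.grPrimRel_trans he hf hg⟩,
    ⟨fun e he h0 => ⟨classIdeal_ne_bot he h0, hdiv.isGradedIdeal_classIdeal he⟩,
      fun e f he hf _ _ hef _ ha _ hb => hdiv.classIdeal_mul_eq_zero he hf hef ha hb⟩,
    ⟨iSup_classIdeal_eq_top,
      fun e he _ => hdiv.classIdeal_inf_iSup_eq_bot he,
      fun e he h0 => ⟨hdiv.subringGrSimple_classIdeal he h0,
        hdiv.subringGrDivision_classIdeal he h0⟩⟩,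
    hdiv.isGrPrime_iff_isGrSimpleRing, hdiv.isGrSimpleRing_iff⟩
end
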